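/- arXiv:2408.15332 — 8 statements merged into one kernel-verified Lean document; each statement's English description precedes it below -/
import Mathlib

section
/- In the free group F₂ on x, y, the normal closure of the two elements x⁻¹y⁻¹xy⁻¹x⁻¹yxy⁻²xyx⁻¹y and y⁻¹x⁻¹y²x⁻¹y⁻¹xyxy⁻²x is all of F₂; equivalently, the balanced presentation ⟨x, y | x⁻¹y⁻¹xy⁻¹x⁻¹yxy⁻²xyx⁻¹y, y⁻¹x⁻¹y²x⁻¹y⁻¹xyxy⁻²x⟩ presents the trivial group. -/
/-- The free group on two generators `x`, `y`. -/
abbrev F2 : Type := FreeGroup (Fin 2)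

def x : F2 := FreeGroup.of 0
def y : F2 := FreeGroup.of 1

/-- A single AC-move on a balanced presentation `(r₁, r₂)`:
replace `r₁` by `r₁ r₂^{±1}`, or `r₂` by `r₂ r₁^{±1}`, or some `rᵢ` by `rᵢ⁻¹`,
or some `rᵢ` by `g rᵢ g⁻¹` with `g ∈ {x, y, x⁻¹, y⁻¹}`. -/
def ACMove (p q : F2 × F2) : Prop :=
  q = (p.1 * p.2, p.2) ∨ q = (p.1 * p.2⁻¹, p.2) ∨
  q = (p.1, p.2 * p.1) ∨ q = (p.1, p.2 * p.1⁻¹) ∨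
  q = (p.1⁻¹, p.2) ∨ q = (p.1, p.2⁻¹) ∨
  ∃ g : F2, (g = x ∨ g = y ∨ g = x⁻¹ ∨ g = y⁻¹) ∧
    (q = (g * p.1 * g⁻¹, p.2) ∨ q = (p.1, g * p.2 * g⁻¹))

/-- Two balanced presentations are AC-equivalent if one can be transformed into the
other by a finite sequence of AC-moves. -/
def ACEquiv : F2 × F2 → F2 × F2 → Prop := Relation.ReflTransGen ACMove

/-- The length of a presentation: the sum of the word lengths of the two relators. -/
def presLength (p : F2 × F2) : ℕ := p.1.norm + p.2.norm

/-- The exponent sum on `x`: the `x`-coordinate of the abelianization. -/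
def expSumX : F2 →* Multiplicative ℤ :=
  FreeGroup.lift (fun i => if i = 0 then Multiplicative.ofAdd (1 : ℤ) else 1)

/-- The Akbulut–Kirby presentation AK(3) = ⟨x, y ∣ x³ = y⁴, xyx = yxy⟩. -/
def AK3 : F2 × F2 := (x ^ 3 * (y ^ 4)⁻¹, x * y * x * y⁻¹ * x⁻¹ * y⁻¹)

theorem length25_presents_trivial_group :
    Subgroup.normalClosure
      ({x⁻¹ * y⁻¹ * x * y⁻¹ * x⁻¹ * y * x * (y ^ 2)⁻¹ * x * y * x⁻¹ * y,
        y⁻¹ * x⁻¹ * y ^ 2 * x⁻¹ * y⁻¹ * x * y * x * (y ^ 2)⁻¹ * x} : Set F2) = ⊤ := by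
  set N := Subgroup.normalClosure
      ({x⁻¹ * y⁻¹ * x * y⁻¹ * x⁻¹ * y * x * (y ^ 2)⁻¹ * x * y * x⁻¹ * y,
        y⁻¹ * x⁻¹ * y ^ 2 * x⁻¹ * y⁻¹ * x * y * x * (y ^ 2)⁻¹ * x} : Set F2) with hNdef
  have hN : N.Normal := Subgroup.normalClosure_normal
  have h0 : (x⁻¹ * y⁻¹ * x * y⁻¹ * x⁻¹ * y * x * y⁻¹ * y⁻¹ * x * y * x⁻¹ * y : F2) ∈ N := by
    have e : (x⁻¹ * y⁻¹ * x * y⁻¹ * x⁻¹ * y * x * y⁻¹ * y⁻¹ * x * y * x⁻¹ * y : F2) = x⁻¹ * y⁻¹ * x * y⁻¹ * x⁻¹ * y * x * (y ^ 2)⁻¹ * x * y * x⁻¹ * y := by decide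
    rw [e]
    exact Subgroup.subset_normalClosure (Set.mem_insert _ _)
  have h1 : (y⁻¹ * x⁻¹ * y * y * x⁻¹ * y⁻¹ * x * y * x * y⁻¹ * y⁻¹ * x : F2) ∈ N := by
    have e : (y⁻¹ * x⁻¹ * y * y * x⁻¹ * y⁻¹ * x * y * x * y⁻¹ * y⁻¹ * x : F2) = y⁻¹ * x⁻¹ * y ^ 2 * x⁻¹ * y⁻¹ * x * y * x * (y ^ 2)⁻¹ * x := by decide
    rw [e]
    exact Subgroup.subset_normalClosure (Set.mem_insert_of_mem _ rfl)
  have h18 : (x⁻¹ * y⁻¹ * x * x * y⁻¹ : F2) ∈ N := by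
    have e : (x⁻¹ * y⁻¹ * x * x * y⁻¹ : F2) = (1 : F2)⁻¹ * (x⁻¹ * y⁻¹ * x * y⁻¹ * x⁻¹ * y * x * y⁻¹ * y⁻¹ * x * y * x⁻¹ * y : F2) * ((1 : F2)⁻¹)⁻¹ * ((y⁻¹ * x⁻¹ * y * y * x⁻¹ * y⁻¹ * x * y * x * y⁻¹ : F2)⁻¹ * (y⁻¹ * x⁻¹ * y * y * x⁻¹ * y⁻¹ * x * y * x * y⁻¹ * y⁻¹ * x : F2) * ((y⁻¹ * x⁻¹ * y * y * x⁻¹ * y⁻¹ * x * y * x * y⁻¹ : F2)⁻¹)⁻¹) := by decide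
    rw [e]
    exact mul_mem (hN.conj_mem _ h0 (1 : F2)⁻¹) (hN.conj_mem _ h1 (y⁻¹ * x⁻¹ * y * y * x⁻¹ * y⁻¹ * x * y * x * y⁻¹ : F2)⁻¹)
  have h591 : (x * y⁻¹ * x⁻¹ * y⁻¹ * x⁻¹ * y * x * y : F2) ∈ N := by
    have e : (x * y⁻¹ * x⁻¹ * y⁻¹ * x⁻¹ * y * x * y : F2) = (x⁻¹ * y⁻¹ * x : F2)⁻¹ * (x⁻¹ * y⁻¹ * x * x * y⁻¹ : F2) * ((x⁻¹ * y⁻¹ * x : F2)⁻¹)⁻¹ * ((y : F2)⁻¹ * (x⁻¹ * y⁻¹ * x * x * y⁻¹ : F2)⁻¹ * ((y : F2)⁻¹)⁻¹) := by decide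
    rw [e]
    exact mul_mem (hN.conj_mem _ h18 (x⁻¹ * y⁻¹ * x : F2)⁻¹) (hN.conj_mem _ (inv_mem h18) (y : F2)⁻¹)
  have h5979 : (y * x * y⁻¹ * y⁻¹ * y⁻¹ * x * y⁻¹ * x⁻¹ * y * y : F2) ∈ N := by
    have e : (y * x * y⁻¹ * y⁻¹ * y⁻¹ * x * y⁻¹ * x⁻¹ * y * y : F2) = (x * y⁻¹ * x⁻¹ * y⁻¹ * x⁻¹ * y * x : F2)⁻¹ * (x * y⁻¹ * x⁻¹ * y⁻¹ * x⁻¹ * y * x * y : F2) * ((x * y⁻¹ * x⁻¹ * y⁻¹ * x⁻¹ * y * x : F2)⁻¹)⁻¹ * ((y⁻¹ * x⁻¹ * y * y : F2)⁻¹ * (y⁻¹ * x⁻¹ * y * y * x⁻¹ * y⁻¹ * x * y * x * y⁻¹ * y⁻¹ * x : F2) * ((y⁻¹ * x⁻¹ * y * y : F2)⁻¹)⁻¹) := by decide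
    rw [e]
    exact mul_mem (hN.conj_mem _ h591 (x * y⁻¹ * x⁻¹ * y⁻¹ * x⁻¹ * y * x : F2)⁻¹) (hN.conj_mem _ h1 (y⁻¹ * x⁻¹ * y * y : F2)⁻¹)
  have h84726 : (y * y * y * x * y⁻¹ * y⁻¹ * y⁻¹ * x⁻¹ * y : F2) ∈ N := by
    have e : (y * y * y * x * y⁻¹ * y⁻¹ * y⁻¹ * x⁻¹ * y : F2) = (y * x * y⁻¹ * y⁻¹ * y⁻¹ * x * y⁻¹ * x⁻¹ : F2)⁻¹ * (y * x * y⁻¹ * y⁻¹ * y⁻¹ * x * y⁻¹ * x⁻¹ * y * y : F2) * ((y * x * y⁻¹ * y⁻¹ * y⁻¹ * x * y⁻¹ * x⁻¹ : F2)⁻¹)⁻¹ * ((y * x⁻¹ * x⁻¹ * y : F2)⁻¹ * (x⁻¹ * y⁻¹ * x * x * y⁻¹ : F2)⁻¹ * ((y * x⁻¹ * x⁻¹ * y : F2)⁻¹)⁻¹) := by decide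
    rw [e]
    exact mul_mem (hN.conj_mem _ h5979 (y * x * y⁻¹ * y⁻¹ * y⁻¹ * x * y⁻¹ * x⁻¹ : F2)⁻¹) (hN.conj_mem _ (inv_mem h18) (y * x⁻¹ * x⁻¹ * y : F2)⁻¹)
  have h92351 : (y * x * y⁻¹ * y⁻¹ * x⁻¹ * y * y * y * x⁻¹ : F2) ∈ N := by
    have e : (y * x * y⁻¹ * y⁻¹ * x⁻¹ * y * y * y * x⁻¹ : F2) = (y * y : F2)⁻¹ * (y * y * y * x * y⁻¹ * y⁻¹ * y⁻¹ * x⁻¹ * y : F2) * ((y * y : F2)⁻¹)⁻¹ * ((y⁻¹ * y⁻¹ * x * y * x⁻¹ * y * y * y * x⁻¹ : F2)⁻¹ * (y * x * y⁻¹ * y⁻¹ * y⁻¹ * x * y⁻¹ * x⁻¹ * y * y : F2)⁻¹ * ((y⁻¹ * y⁻¹ * x * y * x⁻¹ * y * y * y * x⁻¹ : F2)⁻¹)⁻¹) := by decide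
    rw [e]
    exact mul_mem (hN.conj_mem _ h84726 (y * y : F2)⁻¹) (hN.conj_mem _ (inv_mem h5979) (y⁻¹ * y⁻¹ * x * y * x⁻¹ * y * y * y * x⁻¹ : F2)⁻¹)
  have h97319 : (x⁻¹ * y * x * y * x⁻¹ * y⁻¹ : F2) ∈ N := by
    have e : (x⁻¹ * y * x * y * x⁻¹ * y⁻¹ : F2) = (y * x * y⁻¹ * y⁻¹ * x⁻¹ * y * y * y : F2)⁻¹ * (y * x * y⁻¹ * y⁻¹ * x⁻¹ * y * y * y * x⁻¹ : F2) * ((y * x * y⁻¹ * y⁻¹ * x⁻¹ * y * y * y : F2)⁻¹)⁻¹ * ((y⁻¹ * x * y * y * y * x⁻¹ * y⁻¹ : F2)⁻¹ * (y * y * y * x * y⁻¹ * y⁻¹ * y⁻¹ * x⁻¹ * y : F2)⁻¹ * ((y⁻¹ * x * y * y * y * x⁻¹ * y⁻¹ : F2)⁻¹)⁻¹) := by decide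
    rw [e]
    exact mul_mem (hN.conj_mem _ h92351 (y * x * y⁻¹ * y⁻¹ * x⁻¹ * y * y * y : F2)⁻¹) (hN.conj_mem _ (inv_mem h84726) (y⁻¹ * x * y * y * y * x⁻¹ * y⁻¹ : F2)⁻¹)
  have h98183 : (y⁻¹ : F2) ∈ N := by
    have e : (y⁻¹ : F2) = (x⁻¹ * y * x * y * x⁻¹ : F2)⁻¹ * (x⁻¹ * y * x * y * x⁻¹ * y⁻¹ : F2) * ((x⁻¹ * y * x * y * x⁻¹ : F2)⁻¹)⁻¹ * ((x⁻¹ * y⁻¹ * x : F2)⁻¹ * (x⁻¹ * y⁻¹ * x * x * y⁻¹ : F2) * ((x⁻¹ * y⁻¹ * x : F2)⁻¹)⁻¹) := by decide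
    rw [e]
    exact mul_mem (hN.conj_mem _ h97319 (x⁻¹ * y * x * y * x⁻¹ : F2)⁻¹) (hN.conj_mem _ h18 (x⁻¹ * y⁻¹ * x : F2)⁻¹)
  have h98247 : (y : F2) ∈ N := by
    have e : (y : F2) = (1 : F2)⁻¹ * (x⁻¹ * y * x * y * x⁻¹ * y⁻¹ : F2)⁻¹ * ((1 : F2)⁻¹)⁻¹ * ((y * x⁻¹ : F2)⁻¹ * (x⁻¹ * y⁻¹ * x * x * y⁻¹ : F2)⁻¹ * ((y * x⁻¹ : F2)⁻¹)⁻¹) := by decide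
    rw [e]
    exact mul_mem (hN.conj_mem _ (inv_mem h97319) (1 : F2)⁻¹) (hN.conj_mem _ (inv_mem h18) (y * x⁻¹ : F2)⁻¹)
  have h99103 : (x⁻¹ * y : F2) ∈ N := by
    have e : (x⁻¹ * y : F2) = (x⁻¹ : F2)⁻¹ * (x⁻¹ * y * x * y * x⁻¹ * y⁻¹ : F2) * ((x⁻¹ : F2)⁻¹)⁻¹ * ((x * y⁻¹ * x⁻¹ * y⁻¹ * x⁻¹ * y : F2)⁻¹ * (x * y⁻¹ * x⁻¹ * y⁻¹ * x⁻¹ * y * x * y : F2) * ((x * y⁻¹ * x⁻¹ * y⁻¹ * x⁻¹ * y : F2)⁻¹)⁻¹) := by decide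
    rw [e]
    exact mul_mem (hN.conj_mem _ h97319 (x⁻¹ : F2)⁻¹) (hN.conj_mem _ h591 (x * y⁻¹ * x⁻¹ * y⁻¹ * x⁻¹ * y : F2)⁻¹)
  have h107076 : (x : F2) ∈ N := by
    have e : (x : F2) = (y⁻¹ : F2)⁻¹ * (x⁻¹ * y : F2)⁻¹ * ((y⁻¹ : F2)⁻¹)⁻¹ * ((1 : F2)⁻¹ * (y⁻¹ : F2)⁻¹ * ((1 : F2)⁻¹)⁻¹) := by decide
    rw [e]
    exact mul_mem (hN.conj_mem _ (inv_mem h99103) (y⁻¹ : F2)⁻¹) (hN.conj_mem _ (inv_mem h98183) (1 : F2)⁻¹)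
  rw [eq_top_iff, ← FreeGroup.closure_range_of (Fin 2)]
  apply Subgroup.closure_le _ |>.mpr
  rintro g ⟨i, rfl⟩
  fin_cases i
  · exact h107076
  · exact h98247
end

section
/- In the free group F₂ on x, y, the normal closure of x³y⁻⁴ and xyxy⁻¹x⁻¹y⁻¹ is all of F₂; equivalently, AK(3) = ⟨x, y | x³ = y⁴, xyx = yxy⟩ is a presentation of the trivial group. -/
/-!
The braid relation `aba = bab` makes `a` conjugate to `b` by `ba`, hence `a³` conjugate to `b³`.
But `b⁴ = a³` commutes with both `a` and `b`, so conjugation by `ba` fixes it, and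
`ba · b³ · (ba)⁻¹ = a³ = b⁴ = ba · b⁴ · (ba)⁻¹` gives `b³ = b⁴`. Thus `b = 1`, and then `a = 1`.
Since `x` and `y` generate `F₂`, their images in `F₂ / N(r₁, r₂)` being trivial means `N(r₁, r₂) = F₂`.
-/

section Braid

variable {G : Type*} [Group G] {a b : G}

theorem conj_eq_of_braid (h : a * b * a = b * a * b) : b * a * b * (b * a)⁻¹ = a := by
  rw [mul_inv_eq_iff_eq_mul, ← h, mul_assoc]

theorem eq_one_of_braid_of_pow_eq_pow_succ {n : ℕ} (hpow : a ^ n = b ^ (n + 1))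
    (hbraid : a * b * a = b * a * b) : a = 1 ∧ b = 1 := by
  have hconj : b * a * b ^ n * (b * a)⁻¹ = a ^ n := by
    rw [← conj_pow, conj_eq_of_braid hbraid]
  have hcomm : Commute (b * a) (b ^ (n + 1)) :=
    (Commute.self_pow b _).mul_left (hpow ▸ Commute.self_pow a n)
  have hb : b = 1 := by
    have : b * a * b ^ n * (b * a)⁻¹ = b * a * b ^ (n + 1) * (b * a)⁻¹ := by
      rw [hconj, hcomm.mul_inv_cancel, hpow]
    have hsucc : b ^ n = b ^ (n + 1) := mul_left_cancel (mul_right_cancel this)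
    rwa [pow_succ, left_eq_mul] at hsucc
  subst hb
  refine ⟨?_, rfl⟩
  simpa using hbraid

end Braid

theorem FreeGroup.normalClosure_eq_top_of_of_mem {α : Type*} {S : Set (FreeGroup α)}
    (h : ∀ i, FreeGroup.of i ∈ Subgroup.normalClosure S) : Subgroup.normalClosure S = ⊤ := by
  rw [eq_top_iff, ← FreeGroup.closure_range_of, Subgroup.closure_le]
  rintro _ ⟨i, rfl⟩
  exact h i

theorem AK3_presents_trivial_group :
    Subgroup.normalClosure
      ({x ^ 3 * (y ^ 4)⁻¹, x * y * x * y⁻¹ * x⁻¹ * y⁻¹} : Set F2) = ⊤ := by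
  set N := Subgroup.normalClosure ({x ^ 3 * (y ^ 4)⁻¹, x * y * x * y⁻¹ * x⁻¹ * y⁻¹} : Set F2)
  have hpow : (x : F2 ⧸ N) ^ 3 = (y : F2 ⧸ N) ^ (3 + 1) := by
    rw [← QuotientGroup.mk_pow, ← QuotientGroup.mk_pow, QuotientGroup.eq_iff_div_mem,
      div_eq_mul_inv]
    exact Subgroup.subset_normalClosure (by simp)
  have hbraid : (x : F2 ⧸ N) * y * x = y * x * y := by
    have hrel : x * y * x / (y * x * y) = x * y * x * y⁻¹ * x⁻¹ * y⁻¹ := by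
      rw [div_eq_mul_inv]; group
    simp only [← QuotientGroup.mk_mul]
    rw [QuotientGroup.eq_iff_div_mem, hrel]
    exact Subgroup.subset_normalClosure (by simp)
  obtain ⟨hx, hy⟩ := eq_one_of_braid_of_pow_eq_pow_succ hpow hbraid
  refine FreeGroup.normalClosure_eq_top_of_of_mem fun i => ?_
  fin_cases i
  · exact (QuotientGroup.eq_one_iff _).mp hx
  · exact (QuotientGroup.eq_one_iff _).mp hy
end

section
/- For every integer n ≥ 2, the Akbulut–Kirby presentation AK(n) = ⟨x, y | xⁿ = yⁿ⁺¹, xyx = yxy⟩ is a balanced presentation of the trivial group: the normal closure of {xⁿy⁻⁽ⁿ⁺¹⁾, xyxy⁻¹x⁻¹y⁻¹} in the free group F₂ on x, y equals F₂. -/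
section Braid

variable {G : Type*} [Group G] {a b : G}

theorem braid_relator_eq_one_iff :
    a * b * a * b⁻¹ * a⁻¹ * b⁻¹ = 1 ↔ a * b * a = b * a * b := by
  rw [show a * b * a * b⁻¹ * a⁻¹ * b⁻¹ = a * b * a * (b * a * b)⁻¹ by group, mul_inv_eq_one]

theorem semiconjBy_braid_left (h : a * b * a = b * a * b) : SemiconjBy (a * b * a) a b := by
  rw [SemiconjBy]
  conv_lhs => rw [h]
  group

theorem semiconjBy_braid_right (h : a * b * a = b * a * b) : SemiconjBy (a * b * a) b a := by
  rw [SemiconjBy]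
  conv_rhs => rw [h]
  group

theorem pow_succ_eq_pow_of_braid {n : ℕ} (h₁ : a ^ n = b ^ (n + 1)) (h₂ : a * b * a = b * a * b) :
    a ^ (n + 1) = b ^ n := by
  refine mul_right_cancel (b := a * b * a) ?_
  rw [← (semiconjBy_braid_right h₂).pow_right (n + 1), ← h₁,
    (semiconjBy_braid_left h₂).pow_right n]

theorem eq_inv_of_pow_eq_pow_succ_of_braid {n : ℕ} (h₁ : a ^ n = b ^ (n + 1))
    (h₂ : a * b * a = b * a * b) : a = b⁻¹ :=
  calc a = a ^ (n + 1) * (a ^ n)⁻¹ := by group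
    _ = b ^ n * (b ^ (n + 1))⁻¹ := by rw [pow_succ_eq_pow_of_braid h₁ h₂, h₁]
    _ = b⁻¹ := by group

theorem eq_one_of_pow_eq_pow_succ_of_braid {n : ℕ} (h₁ : a ^ n = b ^ (n + 1))
    (h₂ : a * b * a = b * a * b) : a = 1 ∧ b = 1 := by
  have hab : a = b⁻¹ := eq_inv_of_pow_eq_pow_succ_of_braid h₁ h₂
  have hba : b = a := by
    rw [hab] at h₂ ⊢
    simpa [mul_assoc] using h₂.symm
  rw [hba, pow_succ, left_eq_mul] at h₁
  exact ⟨h₁, hba.trans h₁⟩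

end Braid

theorem FreeGroup.eq_top_of_of_mem {α : Type*} {H : Subgroup (FreeGroup α)}
    (h : ∀ i, FreeGroup.of i ∈ H) : H = ⊤ := by
  rw [eq_top_iff, ← FreeGroup.closure_range_of, Subgroup.closure_le]
  rintro _ ⟨i, rfl⟩
  exact h i

theorem AK_presents_trivial_group_general (n : ℕ) :
    Subgroup.normalClosure
      ({x ^ n * (y ^ (n + 1))⁻¹, x * y * x * y⁻¹ * x⁻¹ * y⁻¹} : Set F2) = ⊤ := by
  set N := Subgroup.normalClosure
    ({x ^ n * (y ^ (n + 1))⁻¹, x * y * x * y⁻¹ * x⁻¹ * y⁻¹} : Set F2)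
  have hrel : ∀ r ∈ ({x ^ n * (y ^ (n + 1))⁻¹, x * y * x * y⁻¹ * x⁻¹ * y⁻¹} : Set F2),
      (r : F2 ⧸ N) = 1 := fun r hr =>
    (QuotientGroup.eq_one_iff r).2 (Subgroup.subset_normalClosure hr)
  have h₁ : (x : F2 ⧸ N) ^ n = (y : F2 ⧸ N) ^ (n + 1) := by
    simpa only [QuotientGroup.mk_mul, QuotientGroup.mk_inv, QuotientGroup.mk_pow,
      mul_inv_eq_one] using hrel _ (Set.mem_insert _ _)
  have h₂ : (x : F2 ⧸ N) * y * x = y * x * y := by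
    simpa only [QuotientGroup.mk_mul, QuotientGroup.mk_inv, braid_relator_eq_one_iff]
      using hrel _ (Set.mem_insert_of_mem _ rfl)
  obtain ⟨hx, hy⟩ := eq_one_of_pow_eq_pow_succ_of_braid h₁ h₂
  refine FreeGroup.eq_top_of_of_mem fun i => ?_
  fin_cases i
  · exact (QuotientGroup.eq_one_iff x).1 hx
  · exact (QuotientGroup.eq_one_iff y).1 hy

theorem AK_presents_trivial_group (n : ℕ) (hn : 2 ≤ n) :
    Subgroup.normalClosure
      ({x ^ n * (y ^ (n + 1))⁻¹, x * y * x * y⁻¹ * x⁻¹ * y⁻¹} : Set F2) = ⊤ :=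
  AK_presents_trivial_group_general n
end

section
/- For every integer n ≥ 1 and every word w in the free group F₂ on x, y whose exponent sum on x is zero, the Miller–Schupp presentation MS(n, w) = ⟨x, y | x⁻¹yⁿx = yⁿ⁺¹, x = w⟩ is a balanced presentation of the trivial group: the normal closure of {x⁻¹yⁿxy⁻⁽ⁿ⁺¹⁾, x⁻¹w} in F₂ equals F₂. -/
theorem MS_presents_trivial_group (n : ℕ) (hn : 1 ≤ n) (w : F2) (hw : expSumX w = 1) :
    Subgroup.normalClosure
      ({x⁻¹ * y ^ n * x * (y ^ (n + 1))⁻¹, x⁻¹ * w} : Set F2) = ⊤ := by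
  set S : Set F2 := {x⁻¹ * y ^ n * x * (y ^ (n + 1))⁻¹, x⁻¹ * w} with hS
  set N : Subgroup F2 := Subgroup.normalClosure S with hN
  have hnormal : N.Normal := Subgroup.normalClosure_normal
  set π : F2 →* F2 ⧸ N := QuotientGroup.mk' N with hπ
  have hmem : ∀ g : F2, g ∈ S → π g = 1 := fun g hg =>
    (QuotientGroup.eq_one_iff g).mpr (Subgroup.subset_normalClosure hg)
  have hr1 : π (x⁻¹ * y ^ n * x * (y ^ (n + 1))⁻¹) = 1 := hmem _ (Set.mem_insert _ _)
  have hr2 : π (x⁻¹ * w) = 1 := hmem _ (Set.mem_insert_of_mem _ rfl)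
  simp only [map_mul, map_inv, map_pow] at hr1 hr2
  set X : F2 ⧸ N := π x with hX
  set Y : F2 ⧸ N := π y with hY
  -- hr1 : X⁻¹ * Y ^ n * X * (Y ^ (n+1))⁻¹ = 1
  have h1 : X⁻¹ * Y ^ n * X = Y ^ (n + 1) := mul_inv_eq_one.mp hr1
  have hXw : X = π w := inv_mul_eq_one.mp hr2
  have nnz : ((n : ℤ)) ≠ 0 := Int.natCast_ne_zero.mpr (by omega)
  have n1nz : ((n : ℤ) + 1) ≠ 0 := by
    have : (0 : ℤ) < (n : ℤ) + 1 := by positivity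
    omega
  -- conjugation facts
  have h1z : X⁻¹ * Y ^ ((n : ℤ)) * X = Y ^ ((n : ℤ) + 1) := by
    have e1 : ((n : ℤ)) = ((n : ℕ) : ℤ) := rfl
    have e2 : ((n : ℤ) + 1) = (((n + 1 : ℕ)) : ℤ) := by push_cast; ring
    rw [e1, e2, zpow_natCast, zpow_natCast]
    exact h1
  have hA : ∀ s : ℤ, X⁻¹ * Y ^ ((n : ℤ) * s) * X = Y ^ (((n : ℤ) + 1) * s) := by
    intro s
    have hc := conj_zpow (i := s) (a := X⁻¹) (b := Y ^ ((n : ℤ)))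
    rw [inv_inv] at hc
    rw [zpow_mul, ← hc, h1z, ← zpow_mul]
  have hB : ∀ s : ℤ, X * Y ^ (((n : ℤ) + 1) * s) * X⁻¹ = Y ^ ((n : ℤ) * s) := by
    intro s
    rw [← hA s]
    group
  have hYcomm' : ∀ e : ℤ, Y⁻¹ * Y ^ e * Y = Y ^ e := by
    intro e
    group
  have hYcomm'' : ∀ e : ℤ, Y * Y ^ e * Y⁻¹ = Y ^ e := by
    intro e
    group
  -- single letters
  have hx_mk : FreeGroup.mk [((0 : Fin 2), true)] = x := rfl
  have hxinv_mk : FreeGroup.mk [((0 : Fin 2), false)] = x⁻¹ := by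
    rw [show (x : F2) = FreeGroup.mk [((0 : Fin 2), true)] from rfl, FreeGroup.inv_mk]
    rfl
  have hy_mk : FreeGroup.mk [((1 : Fin 2), true)] = y := rfl
  have hyinv_mk : FreeGroup.mk [((1 : Fin 2), false)] = y⁻¹ := by
    rw [show (y : F2) = FreeGroup.mk [((1 : Fin 2), true)] from rfl, FreeGroup.inv_mk]
    rfl
  have hσx : (expSumX x).toAdd = 1 := by
    rw [show (x : F2) = FreeGroup.of 0 from rfl, expSumX, FreeGroup.lift_apply_of]
    simp
  have hσy : (expSumX y).toAdd = 0 := by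
    rw [show (y : F2) = FreeGroup.of 1 from rfl, expSumX, FreeGroup.lift_apply_of]
    simp
  -- the key conjugation lemma
  have key : ∀ (L : List (Fin 2 × Bool)) (t : ℤ),
      ∃ e' : ℤ,
        (π (FreeGroup.mk L))⁻¹ * Y ^ (t * (n : ℤ) ^ L.length * ((n : ℤ) + 1) ^ L.length) *
            π (FreeGroup.mk L) = Y ^ e' ∧
        e' * (n : ℤ) ^ ((expSumX (FreeGroup.mk L)).toAdd).toNat *
            ((n : ℤ) + 1) ^ (-(expSumX (FreeGroup.mk L)).toAdd).toNat =
          t * (n : ℤ) ^ L.length * ((n : ℤ) + 1) ^ L.length *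
            ((n : ℤ) + 1) ^ ((expSumX (FreeGroup.mk L)).toAdd).toNat *
            (n : ℤ) ^ (-(expSumX (FreeGroup.mk L)).toAdd).toNat := by
    intro L
    induction L with
    | nil =>
      intro t
      refine ⟨t * 1 * 1, ?_, ?_⟩
      · simp [← FreeGroup.one_eq_mk]
      · simp [← FreeGroup.one_eq_mk]
    | cons a L ih =>
      intro t
      obtain ⟨i, b⟩ := a
      have hmk : FreeGroup.mk ((i, b) :: L) = FreeGroup.mk [(i, b)] * FreeGroup.mk L := by
        rw [FreeGroup.mul_mk]
        rfl
      have hσcons : (expSumX (FreeGroup.mk ((i, b) :: L))).toAdd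
          = (expSumX (FreeGroup.mk [(i, b)])).toAdd + (expSumX (FreeGroup.mk L)).toAdd := by
        rw [hmk, map_mul, toAdd_mul]
      have hstep : ∃ (t₁ : ℤ) (p₁ m₁ : ℕ),
          ((expSumX (FreeGroup.mk [(i, b)])).toAdd = (p₁ : ℤ) - (m₁ : ℤ) ∧ min p₁ m₁ = 0) ∧
          (π (FreeGroup.mk [(i, b)]))⁻¹ *
              Y ^ (t * (n : ℤ) ^ (L.length + 1) * ((n : ℤ) + 1) ^ (L.length + 1)) *
              π (FreeGroup.mk [(i, b)])
            = Y ^ (t₁ * (n : ℤ) ^ L.length * ((n : ℤ) + 1) ^ L.length) ∧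
          (t₁ * (n : ℤ) ^ L.length * ((n : ℤ) + 1) ^ L.length) * (n : ℤ) ^ p₁ *
              ((n : ℤ) + 1) ^ m₁
            = (t * (n : ℤ) ^ (L.length + 1) * ((n : ℤ) + 1) ^ (L.length + 1)) *
              ((n : ℤ) + 1) ^ p₁ * (n : ℤ) ^ m₁ := by
        have hi01 : i = 0 ∨ i = 1 := by omega
        rcases hi01 with rfl | rfl <;> cases b
        · -- (0, false) : the letter x⁻¹
          refine ⟨t * (n : ℤ) ^ 2, 0, 1, ⟨?_, rfl⟩, ?_, by ring⟩
          · rw [hxinv_mk, map_inv, toAdd_inv, hσx]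
            norm_num
          · rw [hxinv_mk, map_inv, inv_inv,
              show t * (n : ℤ) ^ (L.length + 1) * ((n : ℤ) + 1) ^ (L.length + 1)
                  = ((n : ℤ) + 1) * (t * (n : ℤ) ^ (L.length + 1) * ((n : ℤ) + 1) ^ L.length)
                by ring,
              hB]
            congr 1
            ring
        · -- (0, true) : the letter x
          refine ⟨t * ((n : ℤ) + 1) ^ 2, 1, 0, ⟨?_, rfl⟩, ?_, by ring⟩
          · rw [hx_mk, hσx]
            norm_num
          · rw [hx_mk,
              show t * (n : ℤ) ^ (L.length + 1) * ((n : ℤ) + 1) ^ (L.length + 1)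
                  = (n : ℤ) * (t * (n : ℤ) ^ L.length * ((n : ℤ) + 1) ^ (L.length + 1))
                by ring,
              hA]
            congr 1
            ring
        · -- (1, false) : the letter y⁻¹
          refine ⟨t * ((n : ℤ) * ((n : ℤ) + 1)), 0, 0, ⟨?_, rfl⟩, ?_, by ring⟩
          · rw [hyinv_mk, map_inv, toAdd_inv, hσy]
            norm_num
          · rw [hyinv_mk, map_inv, inv_inv, hYcomm'']
            congr 1
            ring
        · -- (1, true) : the letter y
          refine ⟨t * ((n : ℤ) * ((n : ℤ) + 1)), 0, 0, ⟨?_, rfl⟩, ?_, by ring⟩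
          · rw [hy_mk, hσy]
            norm_num
          · rw [hy_mk, hYcomm']
            congr 1
            ring
      obtain ⟨t₁, p₁, m₁, ⟨hd1, hmin1⟩, hconj1, hrel1⟩ := hstep
      obtain ⟨e₂, hconj2, hrel2⟩ := ih t₁
      refine ⟨e₂, ?_, ?_⟩
      · simp only [List.length_cons]
        rw [hmk, map_mul, mul_inv_rev]
        calc (π (FreeGroup.mk L))⁻¹ * (π (FreeGroup.mk [(i, b)]))⁻¹ *
              Y ^ (t * (n : ℤ) ^ (L.length + 1) * ((n : ℤ) + 1) ^ (L.length + 1)) *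
              (π (FreeGroup.mk [(i, b)]) * π (FreeGroup.mk L))
            = (π (FreeGroup.mk L))⁻¹ *
              ((π (FreeGroup.mk [(i, b)]))⁻¹ *
                Y ^ (t * (n : ℤ) ^ (L.length + 1) * ((n : ℤ) + 1) ^ (L.length + 1)) *
                π (FreeGroup.mk [(i, b)])) * π (FreeGroup.mk L) := by group
          _ = (π (FreeGroup.mk L))⁻¹ *
                Y ^ (t₁ * (n : ℤ) ^ L.length * ((n : ℤ) + 1) ^ L.length) *
                π (FreeGroup.mk L) := by rw [hconj1]
          _ = Y ^ e₂ := hconj2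
      · simp only [List.length_cons]
        rw [hσcons, hd1]
        set d₂ : ℤ := (expSumX (FreeGroup.mk L)).toAdd with hd₂
        set p₂ : ℕ := d₂.toNat with hp₂
        set m₂ : ℕ := (-d₂).toNat with hm₂
        have hD : e₂ * (n : ℤ) ^ (p₁ + p₂) * ((n : ℤ) + 1) ^ (m₁ + m₂)
            = (t * (n : ℤ) ^ (L.length + 1) * ((n : ℤ) + 1) ^ (L.length + 1)) *
              ((n : ℤ) + 1) ^ (p₁ + p₂) * (n : ℤ) ^ (m₁ + m₂) := by
          rw [pow_add, pow_add, pow_add, pow_add]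
          linear_combination ((n : ℤ) ^ p₁ * ((n : ℤ) + 1) ^ m₁) * hrel2 +
            (((n : ℤ) + 1) ^ p₂ * (n : ℤ) ^ m₂) * hrel1
        set P : ℕ := ((p₁ : ℤ) - (m₁ : ℤ) + d₂).toNat with hP
        set M : ℕ := (-((p₁ : ℤ) - (m₁ : ℤ) + d₂)).toNat with hM
        set c : ℕ := min (p₁ + p₂) (m₁ + m₂) with hc
        have hper : p₁ + p₂ = P + c ∧ m₁ + m₂ = M + c := by
          constructor <;> omega
        have hcanc : (e₂ * (n : ℤ) ^ P * ((n : ℤ) + 1) ^ M) * ((n : ℤ) ^ c * ((n : ℤ) + 1) ^ c)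
            = ((t * (n : ℤ) ^ (L.length + 1) * ((n : ℤ) + 1) ^ (L.length + 1)) *
                ((n : ℤ) + 1) ^ P * (n : ℤ) ^ M) * ((n : ℤ) ^ c * ((n : ℤ) + 1) ^ c) := by
          rw [hper.1, hper.2, pow_add, pow_add, pow_add, pow_add] at hD
          linear_combination hD
        exact mul_right_cancel₀ (mul_ne_zero (pow_ne_zero _ nnz) (pow_ne_zero _ n1nz)) hcanc
  -- apply the key lemma to w
  obtain ⟨e', hconj, hrel⟩ := key w.toWord 1
  rw [FreeGroup.mk_toWord] at hconj hrel
  have hσw : (expSumX w).toAdd = 0 := by rw [hw]; rfl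
  rw [hσw] at hrel
  simp only [neg_zero, Int.toNat_zero, pow_zero, mul_one, one_mul] at hconj hrel
  set l : ℕ := w.toWord.length with hl
  -- hrel : e' = n^l * (n+1)^l
  rw [hrel] at hconj
  rw [← hXw] at hconj
  set E₀ : ℤ := (n : ℤ) ^ l * ((n : ℤ) + 1) ^ l with hE₀
  -- hconj : X⁻¹ * Y ^ E₀ * X = Y ^ E₀
  have hcn : X⁻¹ * Y ^ ((n : ℤ) * E₀) * X = Y ^ ((n : ℤ) * E₀) := by
    rw [mul_comm ((n : ℤ)) E₀, zpow_mul]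
    have hc := conj_zpow (i := ((n : ℤ))) (a := X⁻¹) (b := Y ^ E₀)
    rw [inv_inv] at hc
    rw [← hc, hconj]
  have h2 : Y ^ (((n : ℤ) + 1) * E₀) = Y ^ ((n : ℤ) * E₀) := by
    rw [← hA E₀, hcn]
  have hYE : Y ^ E₀ = 1 := by
    have h3 : Y ^ (((n : ℤ) + 1) * E₀ - (n : ℤ) * E₀) = 1 := by
      rw [zpow_sub, h2, mul_inv_cancel]
    rwa [show ((n : ℤ) + 1) * E₀ - (n : ℤ) * E₀ = E₀ by ring] at h3
  -- strip factors of n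
  have stripA : ∀ a b : ℕ, Y ^ ((n : ℤ) ^ a * ((n : ℤ) + 1) ^ b) = 1 →
      Y ^ (((n : ℤ) + 1) ^ b) = 1 := by
    intro a
    induction a with
    | zero => intro b h; simpa using h
    | succ a iha =>
      intro b h
      have h2' : Y ^ ((n : ℤ) ^ a * ((n : ℤ) + 1) ^ (b + 1)) = 1 := by
        have hc := hA ((n : ℤ) ^ a * ((n : ℤ) + 1) ^ b)
        rw [show (n : ℤ) * ((n : ℤ) ^ a * ((n : ℤ) + 1) ^ b)
              = (n : ℤ) ^ (a + 1) * ((n : ℤ) + 1) ^ b by ring, h] at hc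
        rw [show (n : ℤ) ^ a * ((n : ℤ) + 1) ^ (b + 1)
              = ((n : ℤ) + 1) * ((n : ℤ) ^ a * ((n : ℤ) + 1) ^ b) by ring, ← hc]
        group
      have h3 : Y ^ ((n : ℤ) ^ a * ((n : ℤ) + 1) ^ b) = 1 := by
        rw [show (n : ℤ) ^ a * ((n : ℤ) + 1) ^ b
              = (n : ℤ) ^ a * ((n : ℤ) + 1) ^ (b + 1) - (n : ℤ) ^ (a + 1) * ((n : ℤ) + 1) ^ b
              by ring, zpow_sub, h2', h]
        simp
      exact iha b h3
  -- strip factors of n+1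
  have stripB : ∀ b : ℕ, Y ^ (((n : ℤ) + 1) ^ b) = 1 → Y = 1 := by
    intro b
    induction b with
    | zero => intro h; simpa using h
    | succ b ihb =>
      intro h
      have h2' : Y ^ ((n : ℤ) * ((n : ℤ) + 1) ^ b) = 1 := by
        have hc := hB (((n : ℤ) + 1) ^ b)
        rw [show ((n : ℤ) + 1) * ((n : ℤ) + 1) ^ b = ((n : ℤ) + 1) ^ (b + 1) by ring, h] at hc
        rw [← hc]
        group
      have h3 : Y ^ (((n : ℤ) + 1) ^ b) = 1 := by
        rw [show ((n : ℤ) + 1) ^ b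
              = ((n : ℤ) + 1) ^ (b + 1) - (n : ℤ) * ((n : ℤ) + 1) ^ b by ring,
          zpow_sub, h, h2']
        simp
      exact ihb h3
  have hY1 : Y = 1 := stripB l (stripA l l hYE)
  -- now X = 1
  have hhom : (π : F2 →* F2 ⧸ N) = (zpowersHom (F2 ⧸ N) X).comp expSumX := by
    apply FreeGroup.ext_hom
    intro a
    have ha : a = 0 ∨ a = 1 := by omega
    rcases ha with rfl | rfl
    · rw [MonoidHom.comp_apply, show expSumX (FreeGroup.of (0 : Fin 2))
          = Multiplicative.ofAdd (1 : ℤ) by rw [expSumX, FreeGroup.lift_apply_of]; simp,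
        zpowersHom_apply]
      simp [hX, x]
    · rw [MonoidHom.comp_apply, show expSumX (FreeGroup.of (1 : Fin 2))
          = (1 : Multiplicative ℤ) by rw [expSumX, FreeGroup.lift_apply_of]; simp,
        zpowersHom_apply]
      simp [← hY1, hY, y]
  have hw1 : π w = 1 := by
    rw [hhom, MonoidHom.comp_apply, hw, zpowersHom_apply]
    simp
  have hX1 : X = 1 := by rw [hXw, hw1]
  have hxN : x ∈ N := (QuotientGroup.eq_one_iff x).mp hX1
  have hyN : y ∈ N := (QuotientGroup.eq_one_iff y).mp hY1
  have htop : (⊤ : Subgroup F2) ≤ N := by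
    rw [← FreeGroup.closure_range_of (Fin 2)]
    refine (Subgroup.closure_le _).mpr ?_
    rintro g ⟨i, rfl⟩
    have hi : i = 0 ∨ i = 1 := by omega
    rcases hi with rfl | rfl
    · exact hxN
    · exact hyN
  exact top_le_iff.mp htop
end

section
/- For each sign ε ∈ {+1, −1}, the length-14 balanced presentation ⟨x, y | x⁻¹y³x = y⁴, x = y^ε x² y^ε⟩, i.e. the pair (x⁻¹y³xy⁻⁴, x⁻¹y^ε x² y^ε), is AC-equivalent to AK(3) = (x³y⁻⁴, xyxy⁻¹x⁻¹y⁻¹). -/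
theorem step_m1 {c : F2 × F2} (a b a' : F2) (h1 : a * b = a') (h : ACEquiv (a', b) c) :
    ACEquiv (a, b) c := Relation.ReflTransGen.head (Or.inl (by rw [h1])) h

theorem step_m2 {c : F2 × F2} (a b a' : F2) (h1 : a * b⁻¹ = a') (h : ACEquiv (a', b) c) :
    ACEquiv (a, b) c := Relation.ReflTransGen.head (Or.inr (Or.inl (by rw [h1]))) h

theorem step_m3 {c : F2 × F2} (a b b' : F2) (h1 : b * a = b') (h : ACEquiv (a, b') c) :
    ACEquiv (a, b) c := Relation.ReflTransGen.head (Or.inr (Or.inr (Or.inl (by rw [h1])))) h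

theorem step_m4 {c : F2 × F2} (a b b' : F2) (h1 : b * a⁻¹ = b') (h : ACEquiv (a, b') c) :
    ACEquiv (a, b) c :=
  Relation.ReflTransGen.head (Or.inr (Or.inr (Or.inr (Or.inl (by rw [h1]))))) h

theorem step_m5 {c : F2 × F2} (a b a' : F2) (h1 : a⁻¹ = a') (h : ACEquiv (a', b) c) :
    ACEquiv (a, b) c :=
  Relation.ReflTransGen.head (Or.inr (Or.inr (Or.inr (Or.inr (Or.inl (by rw [h1])))))) h

theorem step_m6 {c : F2 × F2} (a b b' : F2) (h1 : b⁻¹ = b') (h : ACEquiv (a, b') c) :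
    ACEquiv (a, b) c :=
  Relation.ReflTransGen.head (Or.inr (Or.inr (Or.inr (Or.inr (Or.inr (Or.inl (by rw [h1]))))))) h

theorem step_c1 {c : F2 × F2} (g a b a' : F2)
    (hg : g = x ∨ g = y ∨ g = x⁻¹ ∨ g = y⁻¹) (h1 : g * a * g⁻¹ = a')
    (h : ACEquiv (a', b) c) : ACEquiv (a, b) c :=
  Relation.ReflTransGen.head
    (Or.inr (Or.inr (Or.inr (Or.inr (Or.inr (Or.inr ⟨g, hg, Or.inl (by rw [h1])⟩)))))) h

theorem step_c2 {c : F2 × F2} (g a b b' : F2)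
    (hg : g = x ∨ g = y ∨ g = x⁻¹ ∨ g = y⁻¹) (h1 : g * b * g⁻¹ = b')
    (h : ACEquiv (a, b') c) : ACEquiv (a, b) c :=
  Relation.ReflTransGen.head
    (Or.inr (Or.inr (Or.inr (Or.inr (Or.inr (Or.inr ⟨g, hg, Or.inr (by rw [h1])⟩)))))) h

theorem step_fin (a b a' b' : F2) (h1 : a = a') (h2 : b = b') : ACEquiv (a, b) (a', b') := by
  rw [h1, h2]; exact Relation.ReflTransGen.refl


theorem length14_family_two_AC_equivalent_to_AK3 (e : ℤ) (he : e = 1 ∨ e = -1) :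
    ACEquiv (x⁻¹ * y ^ 3 * x * (y ^ 4)⁻¹, x⁻¹ * y ^ e * x ^ 2 * y ^ e) AK3 := by
  rcases he with he | he <;> subst he
  · simp only [AK3, zpow_one, pow_succ, pow_zero, one_mul, mul_inv_rev, mul_assoc]
    refine step_m6 _ _ (y⁻¹ * x⁻¹ * x⁻¹ * y⁻¹ * x) (by decide) ?_
    refine step_m3 _ _ (y⁻¹ * x⁻¹ * x⁻¹ * y * y * x * y⁻¹ * y⁻¹ * y⁻¹ * y⁻¹) (by decide) ?_
    refine step_c1 (x) _ _ (y * y * y * x * y⁻¹ * y⁻¹ * y⁻¹ * y⁻¹ * x⁻¹) (Or.inl rfl) (by decide) ?_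
    refine step_c2 (y) _ _ (x⁻¹ * x⁻¹ * y * y * x * y⁻¹ * y⁻¹ * y⁻¹ * y⁻¹ * y⁻¹) (Or.inr (Or.inl rfl)) (by decide) ?_
    refine step_c2 (x) _ _ (x⁻¹ * y * y * x * y⁻¹ * y⁻¹ * y⁻¹ * y⁻¹ * y⁻¹ * x⁻¹) (Or.inl rfl) (by decide) ?_
    refine step_m4 _ _ (x⁻¹ * y * y * x * y⁻¹ * x⁻¹ * y⁻¹ * y⁻¹ * y⁻¹) (by decide) ?_
    refine step_c2 (x) _ _ (y * y * x * y⁻¹ * x⁻¹ * y⁻¹ * y⁻¹ * y⁻¹ * x⁻¹) (Or.inl rfl) (by decide) ?_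
    refine step_m4 _ _ (y * y * x * y⁻¹ * x⁻¹ * y * x⁻¹ * y⁻¹ * y⁻¹ * y⁻¹) (by decide) ?_
    refine step_c1 (y⁻¹) _ _ (y * y * x * y⁻¹ * y⁻¹ * y⁻¹ * y⁻¹ * x⁻¹ * y) (Or.inr (Or.inr (Or.inr rfl))) (by decide) ?_
    refine step_c2 (y⁻¹) _ _ (y * x * y⁻¹ * x⁻¹ * y * x⁻¹ * y⁻¹ * y⁻¹) (Or.inr (Or.inr (Or.inr rfl))) (by decide) ?_
    refine step_c2 (y⁻¹) _ _ (x * y⁻¹ * x⁻¹ * y * x⁻¹ * y⁻¹) (Or.inr (Or.inr (Or.inr rfl))) (by decide) ?_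
    refine step_c2 (y⁻¹) _ _ (y⁻¹ * x * y⁻¹ * x⁻¹ * y * x⁻¹) (Or.inr (Or.inr (Or.inr rfl))) (by decide) ?_
    refine step_c2 (x⁻¹) _ _ (x⁻¹ * y⁻¹ * x * y⁻¹ * x⁻¹ * y) (Or.inr (Or.inr (Or.inl rfl))) (by decide) ?_
    refine step_m4 _ _ (x⁻¹ * y⁻¹ * x * y * y * y * x⁻¹ * y⁻¹ * y⁻¹) (by decide) ?_
    refine step_m6 _ _ (y * y * x * y⁻¹ * y⁻¹ * y⁻¹ * x⁻¹ * y * x) (by decide) ?_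
    refine step_c2 (x) _ _ (x * y * y * x * y⁻¹ * y⁻¹ * y⁻¹ * x⁻¹ * y) (Or.inl rfl) (by decide) ?_
    refine step_m4 _ _ (x * y * y * x * y * x⁻¹ * y⁻¹ * y⁻¹) (by decide) ?_
    refine step_c1 (y) _ _ (y * y * y * x * y⁻¹ * y⁻¹ * y⁻¹ * y⁻¹ * x⁻¹) (Or.inr (Or.inl rfl)) (by decide) ?_
    refine step_m1 _ _ (y * y * y * x * y⁻¹ * y⁻¹ * x * y * x⁻¹ * y⁻¹ * y⁻¹) (by decide) ?_
    refine step_c2 (x⁻¹) _ _ (y * y * x * y * x⁻¹ * y⁻¹ * y⁻¹ * x) (Or.inr (Or.inr (Or.inl rfl))) (by decide) ?_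
    refine step_c1 (y⁻¹) _ _ (y * y * x * y⁻¹ * y⁻¹ * x * y * x⁻¹ * y⁻¹) (Or.inr (Or.inr (Or.inr rfl))) (by decide) ?_
    refine step_c1 (y⁻¹) _ _ (y * x * y⁻¹ * y⁻¹ * x * y * x⁻¹) (Or.inr (Or.inr (Or.inr rfl))) (by decide) ?_
    refine step_c1 (x⁻¹) _ _ (x⁻¹ * y * x * y⁻¹ * y⁻¹ * x * y) (Or.inr (Or.inr (Or.inl rfl))) (by decide) ?_
    refine step_c1 (y) _ _ (y * x⁻¹ * y * x * y⁻¹ * y⁻¹ * x) (Or.inr (Or.inl rfl)) (by decide) ?_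
    refine step_m2 _ _ (y * x⁻¹ * y * x * x * y⁻¹ * x⁻¹ * y⁻¹ * y⁻¹) (by decide) ?_
    refine step_m5 _ _ (y * y * x * y * x⁻¹ * x⁻¹ * y⁻¹ * x * y⁻¹) (by decide) ?_
    refine step_c1 (y⁻¹) _ _ (y * x * y * x⁻¹ * x⁻¹ * y⁻¹ * x) (Or.inr (Or.inr (Or.inr rfl))) (by decide) ?_
    refine step_m4 _ _ (y * y * x * y * x⁻¹ * y⁻¹ * x * x * y⁻¹ * x⁻¹ * y⁻¹) (by decide) ?_
    refine step_m6 _ _ (y * x * y * x⁻¹ * x⁻¹ * y * x * y⁻¹ * x⁻¹ * y⁻¹ * y⁻¹) (by decide) ?_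
    refine step_c2 (y⁻¹) _ _ (x * y * x⁻¹ * x⁻¹ * y * x * y⁻¹ * x⁻¹ * y⁻¹) (Or.inr (Or.inr (Or.inr rfl))) (by decide) ?_
    refine step_c2 (x⁻¹) _ _ (y * x⁻¹ * x⁻¹ * y * x * y⁻¹ * x⁻¹ * y⁻¹ * x) (Or.inr (Or.inr (Or.inl rfl))) (by decide) ?_
    refine step_m4 _ _ (y * x⁻¹ * x⁻¹ * y * x * y⁻¹ * x * y⁻¹ * x⁻¹ * y⁻¹) (by decide) ?_
    refine step_m6 _ _ (y * x * y * x⁻¹ * y * x⁻¹ * y⁻¹ * x * x * y⁻¹) (by decide) ?_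
    refine step_c1 (x⁻¹) _ _ (x⁻¹ * y * x * y * x⁻¹ * x⁻¹ * y⁻¹ * x * x) (Or.inr (Or.inr (Or.inl rfl))) (by decide) ?_
    refine step_c2 (y⁻¹) _ _ (x * y * x⁻¹ * y * x⁻¹ * y⁻¹ * x * x) (Or.inr (Or.inr (Or.inr rfl))) (by decide) ?_
    refine step_m2 _ _ (x⁻¹ * y * x * y * x⁻¹ * y⁻¹ * x * y⁻¹ * x⁻¹) (by decide) ?_
    refine step_c1 (x⁻¹) _ _ (x⁻¹ * x⁻¹ * y * x * y * x⁻¹ * y⁻¹ * x * y⁻¹) (Or.inr (Or.inr (Or.inl rfl))) (by decide) ?_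
    refine step_m3 _ _ (x * y * x⁻¹ * y * y * x⁻¹ * y⁻¹ * x * y⁻¹) (by decide) ?_
    refine step_m6 _ _ (y * x⁻¹ * y * x * y⁻¹ * y⁻¹ * x * y⁻¹ * x⁻¹) (by decide) ?_
    refine step_c1 (x) _ _ (x⁻¹ * y * x * y * x⁻¹ * y⁻¹ * x * y⁻¹ * x⁻¹) (Or.inl rfl) (by decide) ?_
    refine step_m2 _ _ (x⁻¹ * y * x * y * x⁻¹ * y * x⁻¹ * y⁻¹ * x * y⁻¹) (by decide) ?_
    refine step_c1 (x) _ _ (y * x * y * x⁻¹ * y * x⁻¹ * y⁻¹ * x * y⁻¹ * x⁻¹) (Or.inl rfl) (by decide) ?_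
    refine step_c2 (y⁻¹) _ _ (x⁻¹ * y * x * y⁻¹ * y⁻¹ * x * y⁻¹ * x⁻¹ * y) (Or.inr (Or.inr (Or.inr rfl))) (by decide) ?_
    refine step_c1 (y⁻¹) _ _ (x * y * x⁻¹ * y * x⁻¹ * y⁻¹ * x * y⁻¹ * x⁻¹ * y) (Or.inr (Or.inr (Or.inr rfl))) (by decide) ?_
    refine step_m2 _ _ (x * y * x⁻¹ * y * x⁻¹ * y * x⁻¹ * y⁻¹ * x) (by decide) ?_
    refine step_c2 (y) _ _ (y * x⁻¹ * y * x * y⁻¹ * y⁻¹ * x * y⁻¹ * x⁻¹) (Or.inr (Or.inl rfl)) (by decide) ?_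
    refine step_m5 _ _ (x⁻¹ * y * x * y⁻¹ * x * y⁻¹ * x * y⁻¹ * x⁻¹) (by decide) ?_
    refine step_m2 _ _ (x⁻¹ * y * x * y⁻¹ * x * y * x⁻¹ * y⁻¹ * x * y⁻¹) (by decide) ?_
    refine step_c2 (y⁻¹) _ _ (x⁻¹ * y * x * y⁻¹ * y⁻¹ * x * y⁻¹ * x⁻¹ * y) (Or.inr (Or.inr (Or.inr rfl))) (by decide) ?_
    refine step_c2 (x) _ _ (y * x * y⁻¹ * y⁻¹ * x * y⁻¹ * x⁻¹ * y * x⁻¹) (Or.inl rfl) (by decide) ?_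
    refine step_c1 (x) _ _ (y * x * y⁻¹ * x * y * x⁻¹ * y⁻¹ * x * y⁻¹ * x⁻¹) (Or.inl rfl) (by decide) ?_
    refine step_c1 (y⁻¹) _ _ (x * y⁻¹ * x * y * x⁻¹ * y⁻¹ * x * y⁻¹ * x⁻¹ * y) (Or.inr (Or.inr (Or.inr rfl))) (by decide) ?_
    refine step_m5 _ _ (y⁻¹ * x * y * x⁻¹ * y * x * y⁻¹ * x⁻¹ * y * x⁻¹) (by decide) ?_
    refine step_m2 _ _ (y⁻¹ * x * y * x⁻¹ * y * y * y * x⁻¹ * y⁻¹) (by decide) ?_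
    refine step_c2 (x⁻¹) _ _ (x⁻¹ * y * x * y⁻¹ * y⁻¹ * x * y⁻¹ * x⁻¹ * y) (Or.inr (Or.inr (Or.inl rfl))) (by decide) ?_
    refine step_m3 _ _ (x⁻¹ * y * x * y * x⁻¹ * y⁻¹) (by decide) ?_
    refine step_c2 (x) _ _ (y * x * y * x⁻¹ * y⁻¹ * x⁻¹) (Or.inl rfl) (by decide) ?_
    refine step_m1 _ _ (y⁻¹ * x * y * x⁻¹ * y * y * y * y * x⁻¹ * y⁻¹ * x⁻¹) (by decide) ?_
    refine step_c1 (y) _ _ (x * y * x⁻¹ * y * y * y * y * x⁻¹ * y⁻¹ * x⁻¹ * y⁻¹) (Or.inr (Or.inl rfl)) (by decide) ?_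
    refine step_m1 _ _ (x * y * x⁻¹ * y * y * y * y * x⁻¹ * x⁻¹ * y⁻¹ * x⁻¹) (by decide) ?_
    refine step_c1 (x⁻¹) _ _ (y * x⁻¹ * y * y * y * y * x⁻¹ * x⁻¹ * y⁻¹) (Or.inr (Or.inr (Or.inl rfl))) (by decide) ?_
    refine step_c1 (y⁻¹) _ _ (x⁻¹ * y * y * y * y * x⁻¹ * x⁻¹) (Or.inr (Or.inr (Or.inr rfl))) (by decide) ?_
    refine step_c1 (x) _ _ (y * y * y * y * x⁻¹ * x⁻¹ * x⁻¹) (Or.inl rfl) (by decide) ?_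
    refine step_m6 _ _ (x * y * x * y⁻¹ * x⁻¹ * y⁻¹) (by decide) ?_
    refine step_m5 _ _ (x * x * x * y⁻¹ * y⁻¹ * y⁻¹ * y⁻¹) (by decide) ?_
    exact step_fin _ _ _ _ (by decide) (by decide)
  · simp only [AK3, zpow_neg, zpow_one, pow_succ, pow_zero, one_mul, mul_inv_rev, mul_assoc]
    refine step_c2 (y) _ _ (y * x⁻¹ * y⁻¹ * x * x * y⁻¹ * y⁻¹) (Or.inr (Or.inl rfl)) (by decide) ?_
    refine step_c2 (y) _ _ (y * y * x⁻¹ * y⁻¹ * x * x * y⁻¹ * y⁻¹ * y⁻¹) (Or.inr (Or.inl rfl)) (by decide) ?_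
    refine step_c1 (y⁻¹) _ _ (y⁻¹ * x⁻¹ * y * y * y * x * y⁻¹ * y⁻¹ * y⁻¹) (Or.inr (Or.inr (Or.inr rfl))) (by decide) ?_
    refine step_m4 _ _ (y * y * x⁻¹ * y⁻¹ * x * y⁻¹ * y⁻¹ * y⁻¹ * x * y) (by decide) ?_
    refine step_c2 (y) _ _ (y * y * y * x⁻¹ * y⁻¹ * x * y⁻¹ * y⁻¹ * y⁻¹ * x) (Or.inr (Or.inl rfl)) (by decide) ?_
    refine step_m1 _ _ (y⁻¹ * x⁻¹ * y * y * x * y⁻¹ * y⁻¹ * y⁻¹ * x) (by decide) ?_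
    refine step_c1 (x) _ _ (x * y⁻¹ * x⁻¹ * y * y * x * y⁻¹ * y⁻¹ * y⁻¹) (Or.inl rfl) (by decide) ?_
    refine step_m1 _ _ (x * y⁻¹ * x⁻¹ * y * x * y⁻¹ * y⁻¹ * y⁻¹ * x) (by decide) ?_
    refine step_c1 (x) _ _ (x * x * y⁻¹ * x⁻¹ * y * x * y⁻¹ * y⁻¹ * y⁻¹) (Or.inl rfl) (by decide) ?_
    refine step_m1 _ _ (x * x * y⁻¹ * y⁻¹ * y⁻¹ * y⁻¹ * x) (by decide) ?_
    refine step_m4 _ _ (y * y * y * x⁻¹ * y⁻¹ * x * y * x⁻¹ * x⁻¹) (by decide) ?_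
    refine step_c1 (x) _ _ (x * x * x * y⁻¹ * y⁻¹ * y⁻¹ * y⁻¹) (Or.inl rfl) (by decide) ?_
    refine step_m3 _ _ (y * y * y * x⁻¹ * y⁻¹ * x * y * x * y⁻¹ * y⁻¹ * y⁻¹ * y⁻¹) (by decide) ?_
    refine step_c2 (y⁻¹) _ _ (y * y * x⁻¹ * y⁻¹ * x * y * x * y⁻¹ * y⁻¹ * y⁻¹) (Or.inr (Or.inr (Or.inr rfl))) (by decide) ?_
    refine step_c2 (y⁻¹) _ _ (y * x⁻¹ * y⁻¹ * x * y * x * y⁻¹ * y⁻¹) (Or.inr (Or.inr (Or.inr rfl))) (by decide) ?_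
    refine step_c2 (y⁻¹) _ _ (x⁻¹ * y⁻¹ * x * y * x * y⁻¹) (Or.inr (Or.inr (Or.inr rfl))) (by decide) ?_
    refine step_c2 (x) _ _ (y⁻¹ * x * y * x * y⁻¹ * x⁻¹) (Or.inl rfl) (by decide) ?_
    refine step_c2 (y) _ _ (x * y * x * y⁻¹ * x⁻¹ * y⁻¹) (Or.inr (Or.inl rfl)) (by decide) ?_
    exact step_fin _ _ _ _ (by decide) (by decide)
end

section
/- For every freely reduced word w in the free group F₂ on x, y of word length at most 7 and with zero exponent sum on x, the Miller–Schupp presentation MS(1, w) = (x⁻¹yxy⁻², x⁻¹w) is AC-trivial: it is AC-equivalent to the trivial presentation (x, y). -/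
/-!
Modulo `r₁ = x⁻¹yxy⁻²` the group is the Baumslag–Solitar group `BS(1, 2)`, in which every element
is `xᵃ yᵐ x⁻ᵇ`; zero exponent sum on `x` forces `a = b`, so `x⁻ᵃ (x⁻¹w) xᵃ ≡ x⁻¹yᵐ`. Modulo
`x⁻¹yᵐ` the generator `x` equals `yᵐ` and commutes with `y`, so `r₁ ≡ y⁻¹`; modulo `y` the second
relator becomes `x⁻¹`. Each of these replacements is a sequence of AC-moves, because AC-moves can
conjugate a relator by any element of `F₂` and hence multiply it by any element of the normal
closure of the other relator.
-/

lemma QuotientGroup.mk_normalClosure_singleton_self {G : Type*} [Group G] (g : G) :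
    (g : G ⧸ Subgroup.normalClosure {g}) = 1 :=
  (QuotientGroup.eq_one_iff g).2 (Subgroup.subset_normalClosure rfl)

namespace ACMove

lemma symm {p q : F2 × F2} (h : ACMove p q) : ACMove q p := by
  obtain ⟨a, b⟩ := p
  rcases h with h | h | h | h | h | h | ⟨g, hg, h | h⟩ <;> subst h
  · exact Or.inr (Or.inl (by simp))
  · exact Or.inl (by simp)
  · exact Or.inr (Or.inr (Or.inr (Or.inl (by simp))))
  · exact Or.inr (Or.inr (Or.inl (by simp)))
  · exact Or.inr (Or.inr (Or.inr (Or.inr (Or.inl (by simp)))))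
  · exact Or.inr (Or.inr (Or.inr (Or.inr (Or.inr (Or.inl (by simp))))))
  all_goals
    refine Or.inr (Or.inr (Or.inr (Or.inr (Or.inr (Or.inr ⟨g⁻¹, ?_, by simp [mul_assoc]⟩)))))
    rcases hg with rfl | rfl | rfl | rfl <;> simp

lemma swap {p q : F2 × F2} (h : ACMove p q) : ACMove p.swap q.swap := by
  obtain ⟨a, b⟩ := p
  rcases h with h | h | h | h | h | h | ⟨g, hg, h | h⟩ <;> subst h
  · exact Or.inr (Or.inr (Or.inl rfl))
  · exact Or.inr (Or.inr (Or.inr (Or.inl rfl)))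
  · exact Or.inl rfl
  · exact Or.inr (Or.inl rfl)
  · exact Or.inr (Or.inr (Or.inr (Or.inr (Or.inr (Or.inl rfl)))))
  · exact Or.inr (Or.inr (Or.inr (Or.inr (Or.inl rfl))))
  · exact Or.inr (Or.inr (Or.inr (Or.inr (Or.inr (Or.inr ⟨g, hg, Or.inr rfl⟩)))))
  · exact Or.inr (Or.inr (Or.inr (Or.inr (Or.inr (Or.inr ⟨g, hg, Or.inl rfl⟩)))))

instance : Std.Symm ACMove := ⟨fun _ _ => symm⟩

end ACMove

namespace ACEquiv

lemma refl {p : F2 × F2} : ACEquiv p p := Relation.ReflTransGen.refl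

lemma trans {p q r : F2 × F2} (h₁ : ACEquiv p q) (h₂ : ACEquiv q r) : ACEquiv p r :=
  Relation.ReflTransGen.trans h₁ h₂

instance : Trans ACEquiv ACEquiv ACEquiv := ⟨trans⟩

lemma symm {p q : F2 × F2} (h : ACEquiv p q) : ACEquiv q p :=
  Relation.ReflTransGen.stdSymm.symm _ _ h

lemma swap {p q : F2 × F2} (h : ACEquiv p q) : ACEquiv p.swap q.swap :=
  Relation.ReflTransGen.lift Prod.swap (fun _ _ => ACMove.swap) _ _ h

lemma inv_left (a b : F2) : ACEquiv (a, b) (a⁻¹, b) :=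
  .single (Or.inr (Or.inr (Or.inr (Or.inr (Or.inl rfl)))))

lemma inv_right (a b : F2) : ACEquiv (a, b) (a, b⁻¹) :=
  .single (Or.inr (Or.inr (Or.inr (Or.inr (Or.inr (Or.inl rfl))))))

lemma mul_left (a b : F2) : ACEquiv (a, b) (a * b, b) := .single (Or.inl rfl)

lemma mul_right (a b : F2) : ACEquiv (a, b) (a, b * a) :=
  .single (Or.inr (Or.inr (Or.inl rfl)))

lemma conj_right_of_letter {g : F2} (hg : g = x ∨ g = y ∨ g = x⁻¹ ∨ g = y⁻¹)
    (a b : F2) : ACEquiv (a, b) (a, g * b * g⁻¹) :=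
  .single (Or.inr (Or.inr (Or.inr (Or.inr (Or.inr (Or.inr ⟨g, hg, Or.inr rfl⟩))))))

lemma conj_right (g a b : F2) : ACEquiv (a, b) (a, g * b * g⁻¹) := by
  induction g using FreeGroup.induction_on generalizing b with
  | C1 => simpa using ACEquiv.refl
  | of i => fin_cases i <;> exact conj_right_of_letter (by unfold x y; decide) a b
  | inv_of i _ => fin_cases i <;> exact conj_right_of_letter (by unfold x y; decide) a b
  | mul g h hg hh =>
    simpa [mul_assoc] using (hh b).trans (hg (h * b * h⁻¹))

def rightMultipliers (a : F2) : Subgroup F2 where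
  carrier := {n | ∀ b, ACEquiv (a, b) (a, b * n)}
  one_mem' b := by simpa using ACEquiv.refl
  mul_mem' hm hn b := by simpa [mul_assoc] using (hm b).trans (hn _)
  inv_mem' {n} hn b := by simpa using (hn (b * n⁻¹)).symm

instance (a : F2) : (rightMultipliers a).Normal where
  conj_mem n hn g b := by
    simpa [mul_assoc] using
      ((conj_right g⁻¹ a b).trans (hn _)).trans (conj_right g a _)

lemma mul_right_of_mem_normalClosure {a n : F2} (hn : n ∈ Subgroup.normalClosure {a}) (b : F2) :
    ACEquiv (a, b) (a, b * n) :=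
  Subgroup.normalClosure_le_normal (N := rightMultipliers a)
    (Set.singleton_subset_iff.2 (mul_right a)) hn b

lemma right_of_mk_eq {a b b' : F2} (h : (b : F2 ⧸ Subgroup.normalClosure {a}) = b') :
    ACEquiv (a, b) (a, b') := by
  simpa using mul_right_of_mem_normalClosure (QuotientGroup.eq.1 h) b

lemma left_of_mk_eq {a a' b : F2} (h : (a : F2 ⧸ Subgroup.normalClosure {b}) = a') :
    ACEquiv (a, b) (a', b) :=
  (right_of_mk_eq h).swap

lemma self_swap (p : F2 × F2) : ACEquiv p p.swap := by
  obtain ⟨a, b⟩ := p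
  -- `b ≡ a⁻¹` modulo `ab`, and `ab ≡ b` modulo `a⁻¹`.
  calc ACEquiv (a, b) (a * b, b) := mul_left a b
    ACEquiv _ (a * b, a⁻¹) := right_of_mk_eq ?_
    ACEquiv _ (b, a⁻¹) := left_of_mk_eq ?_
    ACEquiv _ (b, a) := by simpa using inv_right b a⁻¹
  · have hab := QuotientGroup.mk_normalClosure_singleton_self (a * b)
    rw [QuotientGroup.mk_mul] at hab
    rw [QuotientGroup.mk_inv]
    exact eq_inv_of_mul_eq_one_right hab
  · have ha := QuotientGroup.mk_normalClosure_singleton_self a⁻¹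
    rw [QuotientGroup.mk_inv, inv_eq_one] at ha
    rw [QuotientGroup.mk_mul, ha, one_mul]

end ACEquiv

section BaumslagSolitar

variable {G : Type*} [Group G] {X Y : G}

lemma zpow_mul_eq_mul_zpow_two_mul (h : X⁻¹ * Y * X = Y ^ 2) (k : ℤ) :
    Y ^ k * X = X * Y ^ (2 * k) := by
  have hconj : X⁻¹ * Y ^ k * X = Y ^ (2 * k) := by
    have := (conj_zpow (a := X⁻¹) (b := Y) (i := k)).symm
    rwa [inv_inv, h, ← zpow_natCast, ← zpow_mul, Nat.cast_ofNat] at this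
  rw [← hconj]
  group

lemma zpow_mul_pow_eq_pow_mul_zpow (h : X⁻¹ * Y * X = Y ^ 2) (k : ℤ) (a : ℕ) :
    Y ^ k * X ^ a = X ^ a * Y ^ (2 ^ a * k) := by
  induction a generalizing k with
  | zero => simp
  | succ a ih =>
    rw [pow_succ, ← mul_assoc, ih, mul_assoc, zpow_mul_eq_mul_zpow_two_mul h, pow_succ]
    group

/-- In the Baumslag–Solitar group `⟨X, Y | X⁻¹YX = Y²⟩` every element has this form. -/
def bsNormalForms (X Y : G) : Set G := {g | ∃ (a b : ℕ) (m : ℤ), g = X ^ a * Y ^ m * (X ^ b)⁻¹}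

lemma mul_mem_bsNormalForms {g : G} (hg : g ∈ bsNormalForms X Y) : X * g ∈ bsNormalForms X Y := by
  obtain ⟨a, b, m, rfl⟩ := hg
  exact ⟨a + 1, b, m, by group⟩

lemma inv_mul_mem_bsNormalForms (h : X⁻¹ * Y * X = Y ^ 2) {g : G} (hg : g ∈ bsNormalForms X Y) :
    X⁻¹ * g ∈ bsNormalForms X Y := by
  obtain ⟨a, b, m, rfl⟩ := hg
  cases a with
  | zero =>
    refine ⟨0, b + 1, 2 * m, ?_⟩
    rw [pow_zero, one_mul, one_mul, ← mul_one (Y ^ m), ← mul_inv_cancel X, ← mul_assoc (Y ^ m),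
      zpow_mul_eq_mul_zpow_two_mul h]
    group
  | succ a => exact ⟨a, b, m, by group⟩

lemma zpow_mul_mem_bsNormalForms (h : X⁻¹ * Y * X = Y ^ 2) (k : ℤ) {g : G}
    (hg : g ∈ bsNormalForms X Y) : Y ^ k * g ∈ bsNormalForms X Y := by
  obtain ⟨a, b, m, rfl⟩ := hg
  refine ⟨a, b, 2 ^ a * k + m, ?_⟩
  rw [← mul_assoc, ← mul_assoc, zpow_mul_pow_eq_pow_mul_zpow h, zpow_add]
  group

lemma map_mem_bsNormalForms (f : F2 →* G) (h : (f x)⁻¹ * f y * f x = f y ^ 2) (w : F2) :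
    f w ∈ bsNormalForms (f x) (f y) := by
  suffices ∀ g ∈ bsNormalForms (f x) (f y), f w * g ∈ bsNormalForms (f x) (f y) by
    simpa using this 1 ⟨0, 0, 0, by simp⟩
  induction w using FreeGroup.induction_on with
  | C1 => simp
  | of i =>
    fin_cases i <;> intro g hg
    · exact mul_mem_bsNormalForms hg
    · simpa [y] using zpow_mul_mem_bsNormalForms h 1 hg
  | inv_of i _ =>
    fin_cases i <;> intro g hg
    · simpa [x] using inv_mul_mem_bsNormalForms h hg
    · simpa [y] using zpow_mul_mem_bsNormalForms h (-1) hg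
  | mul v w hv hw => simpa [mul_assoc] using fun g hg => hv _ (hw g hg)

end BaumslagSolitar

lemma expSumX_x : expSumX x = Multiplicative.ofAdd 1 := by simp [expSumX, x]

lemma expSumX_y : expSumX y = 1 := by simp [expSumX, y]

lemma normalClosure_le_ker_expSumX :
    Subgroup.normalClosure {x⁻¹ * y * x * (y ^ 2)⁻¹} ≤ expSumX.ker :=
  Subgroup.normalClosure_le_normal (by simp [expSumX_x, expSumX_y])

theorem MS1_AC_trivial_general (w : F2) (hx : expSumX w = 1) :
    ACEquiv (x⁻¹ * y * x * (y ^ 2)⁻¹, x⁻¹ * w) (x, y) := by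
  set r := x⁻¹ * y * x * (y ^ 2)⁻¹
  set π := QuotientGroup.mk' (Subgroup.normalClosure {r})
  have hrel : (π x)⁻¹ * π y * π x = π y ^ 2 := by
    simpa [r, π, mul_inv_eq_one] using QuotientGroup.mk_normalClosure_singleton_self r
  obtain ⟨a, b, m, hw⟩ := map_mem_bsNormalForms π hrel w
  simp only [π, QuotientGroup.mk'_apply] at hw
  obtain rfl : a = b := by
    have hexp := congrArg
      (Multiplicative.toAdd ∘ QuotientGroup.lift _ expSumX normalClosure_le_ker_expSumX) hw
    simp only [Function.comp_apply, QuotientGroup.lift_mk, hx, toAdd_one, map_mul, map_pow,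
      map_zpow, map_inv, expSumX_x, expSumX_y, one_zpow, mul_one, toAdd_mul, toAdd_pow,
      toAdd_ofAdd, toAdd_inv, Int.nsmul_eq_mul] at hexp
    omega
  calc ACEquiv (r, x⁻¹ * w) (r, (x ^ a)⁻¹ * (x⁻¹ * w) * x ^ a) := by
        simpa using ACEquiv.conj_right (x ^ a)⁻¹ r (x⁻¹ * w)
    ACEquiv _ (r, x⁻¹ * y ^ m) := ACEquiv.right_of_mk_eq ?r₂_mod_r₁
    ACEquiv _ (y⁻¹, x⁻¹ * y ^ m) := ACEquiv.left_of_mk_eq ?r₁_mod_r₂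
    ACEquiv _ (y, x⁻¹ * y ^ m) := by simpa using ACEquiv.inv_left y⁻¹ (x⁻¹ * y ^ m)
    ACEquiv _ (y, x⁻¹) := ACEquiv.right_of_mk_eq ?r₂_mod_y
    ACEquiv _ (y, x) := by simpa using ACEquiv.inv_right y x⁻¹
    ACEquiv _ (x, y) := ACEquiv.self_swap (y, x)
  case r₂_mod_r₁ =>
    simp only [QuotientGroup.mk_mul, QuotientGroup.mk_inv, QuotientGroup.mk_pow,
      QuotientGroup.mk_zpow, hw]
    group
  case r₁_mod_r₂ =>
    have hxy := QuotientGroup.mk_normalClosure_singleton_self (x⁻¹ * y ^ m)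
    rw [QuotientGroup.mk_mul, QuotientGroup.mk_inv, QuotientGroup.mk_zpow, inv_mul_eq_one] at hxy
    simp only [r, QuotientGroup.mk_mul, QuotientGroup.mk_inv, QuotientGroup.mk_pow, hxy]
    group
  case r₂_mod_y => simp [QuotientGroup.mk_normalClosure_singleton_self y]

theorem MS1_AC_trivial (w : F2) (hlen : w.norm ≤ 7) (hx : expSumX w = 1) :
    ACEquiv (x⁻¹ * y * x * (y ^ 2)⁻¹, x⁻¹ * w) (x, y) :=
  MS1_AC_trivial_general w hx
end

section
/- For every integer n with 1 ≤ n ≤ 7 and every freely reduced word w in F₂ of length at most 7 with zero exponent sum on x, if the presentation MS(n, w) = (x⁻¹yⁿxy⁻⁽ⁿ⁺¹⁾, x⁻¹w) has total length strictly less than 14 (where the second relator x⁻¹w is taken freely reduced), then MS(n, w) is AC-trivial. -/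
/-!
The first relator has length `2n + 3` and `x⁻¹w ≠ 1` (its exponent sum on `x` is `-1`), so the
length bound leaves `n ≤ 4` and finitely many `w`. For each of these cases an explicit sequence
of AC-moves, found by computer search and stored in compressed form, trivializes the
presentation; the kernel replays all of them on freely reduced words.
-/

open FreeGroup

inductive ACStep
  | mul₁ (inv : Bool)
  | mul₂ (inv : Bool)
  | inv₁
  | inv₂
  | conj₁ (a : Fin 2 × Bool)
  | conj₂ (a : Fin 2 × Bool)

namespace ACStep

def apply : ACStep → List (Fin 2 × Bool) × List (Fin 2 × Bool) →
    List (Fin 2 × Bool) × List (Fin 2 × Bool)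
  | mul₁ false, (u, v) => (reduce (u ++ v), v)
  | mul₁ true, (u, v) => (reduce (u ++ invRev v), v)
  | mul₂ false, (u, v) => (u, reduce (v ++ u))
  | mul₂ true, (u, v) => (u, reduce (v ++ invRev u))
  | inv₁, (u, v) => (invRev u, v)
  | inv₂, (u, v) => (u, invRev v)
  | conj₁ a, (u, v) => (reduce (a :: u ++ invRev [a]), v)
  | conj₂ a, (u, v) => (u, reduce (a :: v ++ invRev [a]))

lemma mk_singleton_mem (a : Fin 2 × Bool) :
    mk [a] = x ∨ mk [a] = y ∨ mk [a] = x⁻¹ ∨ mk [a] = y⁻¹ := by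
  revert a
  decide

lemma mk_conj (a : Fin 2 × Bool) (u : List (Fin 2 × Bool)) :
    mk (reduce (a :: u ++ invRev [a])) = mk [a] * mk u * (mk [a])⁻¹ := by
  rw [reduce.self, inv_mk, mul_mk, mul_mk]
  rfl

theorem acMove_apply (s : ACStep) (p : List (Fin 2 × Bool) × List (Fin 2 × Bool)) :
    ACMove (Prod.map mk mk p) (Prod.map mk mk (s.apply p)) := by
  obtain ⟨u, v⟩ := p
  cases s with
  | mul₁ inv => cases inv <;> simp [ACMove, apply, reduce.self, mul_mk, inv_mk]
  | mul₂ inv => cases inv <;> simp [ACMove, apply, reduce.self, mul_mk, inv_mk]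
  | inv₁ => simp [ACMove, apply, inv_mk]
  | inv₂ => simp [ACMove, apply, inv_mk]
  | conj₁ a =>
    refine .inr (.inr (.inr (.inr (.inr (.inr ⟨mk [a], mk_singleton_mem a, .inl ?_⟩)))))
    simp only [apply, Prod.map_apply, mk_conj]
  | conj₂ a =>
    refine .inr (.inr (.inr (.inr (.inr (.inr ⟨mk [a], mk_singleton_mem a, .inr ?_⟩)))))
    simp only [apply, Prod.map_apply, mk_conj]

theorem acEquiv_foldl_apply (ss : List ACStep) (p : List (Fin 2 × Bool) × List (Fin 2 × Bool)) :
    ACEquiv (Prod.map mk mk p) (Prod.map mk mk (ss.foldl (fun p s => s.apply p) p)) := by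
  induction ss generalizing p with
  | nil => exact .refl
  | cons s ss ih => exact .head (s.acMove_apply p) (ih _)

end ACStep

def msWord (n : ℕ) : List (Fin 2 × Bool) :=
  (0, false) :: (List.replicate n (1, true) ++ (0, true) :: List.replicate (n + 1) (1, false))

lemma isReduced_msWord {n : ℕ} (hn : n ≠ 0) : IsReduced (msWord n) := by
  simp [FreeGroup.IsReduced, msWord, List.isChain_append, List.isChain_cons,
    List.isChain_replicate_of_rel, List.head?_replicate, List.getLast?_replicate, hn]

lemma mk_msWord (n : ℕ) : mk (msWord n) = x⁻¹ * y ^ n * x * (y ^ (n + 1))⁻¹ := by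
  have hpow (k : ℕ) : y ^ k = mk (List.replicate k (1, true)) := by
    rw [y, ← toWord_of_pow, mk_toWord]
  rw [hpow, hpow]
  change mk _ = (mk [(0, true)])⁻¹ * _ * mk [(0, true)] * _
  rw [inv_mk, inv_mk, mul_mk, mul_mk, mul_mk]
  simp [msWord, invRev]

lemma norm_msRelator {n : ℕ} (hn : n ≠ 0) :
    (x⁻¹ * y ^ n * x * (y ^ (n + 1))⁻¹).norm = 2 * n + 3 := by
  rw [← mk_msWord, FreeGroup.norm, toWord_mk, (isReduced_msWord hn).reduce_eq, msWord]
  simp only [List.length_cons, List.length_append, List.length_replicate]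
  omega

namespace ACStep

def ofDigit : ℕ → ACStep
  | 1 => mul₁ false | 2 => mul₁ true | 3 => mul₂ false | 4 => mul₂ true
  | 5 => inv₁ | 6 => inv₂
  | 7 => conj₁ (0, true) | 8 => conj₁ (1, true) | 9 => conj₁ (0, false) | 10 => conj₁ (1, false)
  | 11 => conj₂ (0, true) | 12 => conj₂ (1, true) | 13 => conj₂ (0, false)
  | _ => conj₂ (1, false)

/-- The first argument is fuel: `decode c c` reads all base-15 digits of `c`, since `c / 15 < c`. -/
def decode : ℕ → ℕ → List ACStep
  | 0, _ | _, 0 => []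
  | fuel + 1, c => ofDigit (c % 15) :: decode fuel (c / 15)

end ACStep

namespace MillerSchupp

def letterCode (a : Fin 2 × Bool) : ℕ := a.1.val + if a.2 then 0 else 2

def wordCode : List (Fin 2 × Bool) → ℕ
  | [] => 0
  | a :: L => letterCode a + 1 + 5 * wordCode L

inductive CodeTree
  | leaf
  | node (l : CodeTree) (key code : ℕ) (r : CodeTree)

/-- A missing key gives code `0`, the empty move sequence. -/
def CodeTree.find (k : ℕ) : CodeTree → ℕ
  | leaf => 0
  | node l key code r => if k < key then find k l else if k = key then code else find k r

/- `tableₙ` maps the `wordCode` of a second relator `r₂` to the code of a sequence of `ACStep`s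
taking `(x⁻¹yⁿxy⁻⁽ⁿ⁺¹⁾, r₂)` to `(x, y)`; the sequences were found by computer search. -/

def table1 : CodeTree :=
  .node (.node (.node (.node (.node (.node (.node (.node (.node (.node .leaf 3 4669912 .leaf) 13
  900881120 .leaf) 17 268450 (.node (.node .leaf 19 316162 .leaf) 23 225107 .leaf)) 63 13513290095
  (.node (.node (.node .leaf 67 1027602 .leaf) 69 70048692 .leaf) 87 68506 (.node .leaf 99 4618612
  .leaf))) 117 70048694 (.node (.node (.node (.node .leaf 119 753507492 .leaf) 123 50233832 .leaf)
  193 13513216811 (.node .leaf 243 3376616 .leaf)) 313 229561196 (.node (.node (.node .leaf 317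
  15304077 .leaf) 319 13513216812 .leaf) 337 1020271 (.node .leaf 349 4742442 .leaf)))) 437 15304079
  (.node (.node (.node (.node (.node .leaf 461 4026763 .leaf) 471 4742443 .leaf) 499 69166162 (.node
  .leaf 587 17986 .leaf)) 599 1037492542 (.node (.node (.node .leaf 617 3376619 .leaf) 619
  2544486511992 .leaf) 623 3662601762257 (.node .leaf 943 202699351436 .leaf))) 963 15414041 (.node
  (.node (.node (.node .leaf 967 197736013060 .leaf) 969 203172526737 .leaf) 973 1050730391 (.node
  .leaf 1213 3376608 .leaf)) 1217 50649288 (.node (.node (.node .leaf 1219 824085396508008 .leaf)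
  1223 11302612391 .leaf) 1243 753507491 (.node .leaf 1443 684110312845145 .leaf))))) 1493 759739332
  (.node (.node (.node (.node (.node (.node .leaf 1563 3441717417 .leaf) 1567 229447827 .leaf) 1569
  202699351437 (.node (.node .leaf 1587 15296521 .leaf) 1599 1050730392 .leaf)) 1687 229447829
  (.node (.node (.node .leaf 1711 12206773346974610 .leaf) 1721 3551987655532 .leaf) 1749 69279192
  (.node .leaf 2163 45607354189670 .leaf))) 2173 11396089993 (.node (.node (.node (.node .leaf 2187
  53134499415082 .leaf) 2211 15414043 .leaf) 2221 1050730393 (.node .leaf 2307 684110312845175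
  .leaf)) 2309 6137502007 (.node (.node (.node .leaf 2311 1027603 .leaf) 2357 236799176932 .leaf)
  2359 529606306098882 (.node .leaf 2371 69279193 .leaf)))) 2413 236359076195 (.node (.node (.node
  (.node (.node .leaf 2423 529606306098898 .leaf) 2461 1050730423 .leaf) 2471 11302612393 (.node
  .leaf 2499 1037369287 .leaf)) 2693 13544835115 (.node (.node (.node .leaf 2743 12361280947620134
  .leaf) 2937 1027604 .leaf) 2961 759739333 (.node .leaf 2971 12361280947620133 .leaf))) 2999
  15560539417 (.node (.node (.node (.node .leaf 3087 257611 .leaf) 3099 233408091367 .leaf) 3117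
  753507494 (.node .leaf 3119 233408090662 .leaf)) 3123 15560539372 (.node (.node (.node .leaf 4093
  202698252176 .leaf) 4343 50649251 .leaf) 4693 3443417951 (.node .leaf 4713 229561166 .leaf))))))
  4717 30640029843383836828742181 (.node (.node (.node (.node (.node (.node (.node .leaf 4719
  667359044085312 .leaf) 4723 202698252191 .leaf) 4813 15304076 (.node (.node .leaf 4817
  40351909062577164685 .leaf) 4819 13207901562 .leaf)) 4837 45791867084916 (.node (.node (.node
  .leaf 4849 15760954092 .leaf) 4867 58658773431 .leaf) 4869 5701472937 (.node .leaf 4873 71136641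
  .leaf))) 6063 70048683 (.node (.node (.node (.node .leaf 6067 1050730413 .leaf) 6069 11302612383
  .leaf) 6087 3864168 (.node .leaf 6099 3501121370508 .leaf)) 6117 11302612413 (.node (.node (.node
  .leaf 6119 3501121359933 .leaf) 6123 15562388141 .leaf) 6213 50649296 (.node .leaf 6217
  625789847973269311589 .leaf)))) 6219 2658664039109374113 (.node (.node (.node (.node (.node .leaf
  6223 824085396508016 .leaf) 6243 2544486511991 .leaf) 7193 1760397496596125274456776 (.node .leaf
  7213 2318218925558756501 .leaf)) 7217 686878006273752 (.node (.node (.node .leaf 7219 202698252177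
  .leaf) 7223 11987958336650497 .leaf) 7463 15760956207 (.node .leaf 7467 57962532 .leaf))) 7469
  50649252 (.node (.node (.node (.node .leaf 7473 169539186207 .leaf) 7493 41719323198217954105
  .leaf) 7693 2318218925558791151 (.node .leaf 7743 869437992 .leaf)) 7813 179328935525992132 (.node
  (.node (.node .leaf 7817 2318218925558683377 .leaf) 7819 3443417952 .leaf) 7837 183118110417453891
  (.node .leaf 7849 202698252192 .leaf))))) 7937 2318218925558683379 (.node (.node (.node (.node
  (.node (.node .leaf 7961 459600447650757552431132728 .leaf) 7971 2690320415375194162 .leaf) 7999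
  71136642 (.node .leaf 8413 12207010333689951 .leaf)) 8423 13660258887 (.node (.node (.node .leaf
  8437 179328935525992357 .leaf) 8461 2318218925558756277 .leaf) 8471 154547847726997912 (.node
  .leaf 8557 30640029843386119753346272 .leaf))) 8559 60401457 (.node (.node (.node (.node .leaf
  8561 54277197586672 .leaf) 8607 179354694358346272 .leaf) 8609 71136657 (.node .leaf 8621
  203656230532 .leaf)) 8663 3040473892295 (.node (.node (.node .leaf 8673 1380937954432 .leaf) 8711
  3542299993057 .leaf) 8721 15762493057 (.node .leaf 8749 1037492442 .leaf)))) 10813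
  117359833106408351630451 (.node (.node (.node (.node (.node .leaf 10817 183118110417458766 .leaf)
  10819 829298372833987 .leaf) 10867 910683925 (.node .leaf 10869 128744436160952737 .leaf)) 10873
  625789847973269311588 (.node (.node (.node .leaf 10913 183118110417461076 .leaf) 10923 15760957207
  .leaf) 10937 11955262368399457 (.node .leaf 10961 229561168 .leaf))) 10971 202698252193 (.node
  (.node (.node (.node .leaf 11057 183118110417458751 .leaf) 11059 236414694112 .leaf) 11061
  15304078 (.node .leaf 11107 10303189848466522 .leaf)) 11109 1235987144737 (.node (.node (.node
  .leaf 11121 71136643 .leaf) 11537 1760397496596125274456876 .leaf) 11549 9386847719599039673833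
  (.node .leaf 11557 814157963800192 .leaf))))))) 11559 13473047632 (.node (.node (.node (.node
  (.node (.node (.node (.node .leaf 11561 229561198 .leaf) 11681 60401458 .leaf) 11731 71136658
  (.node (.node .leaf 11787 2690320415375195872 .leaf) 11799 8972991131873677955737 .leaf)) 11857
  13577081932 (.node (.node (.node .leaf 11859 15587830102 .leaf) 11871 1037492443 .leaf) 12063
  667359044085313 (.node .leaf 12067 45607108384565 .leaf))) 12069 15197709785 (.node (.node (.node
  (.node .leaf 12117 169526092300 .leaf) 12119 787752305985148 .leaf) 12123 598199408799609175648
  (.node .leaf 12307 829298372834002 .leaf)) 12309 128744436160952752 (.node (.node (.node .leaf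
  12311 269803 .leaf) 12357 3545618309647 .leaf) 12359 787752305985132 (.node .leaf 12371
  15562388143 .leaf)))) 12413 70048642 (.node (.node (.node (.node (.node .leaf 12423 1039188667
  .leaf) 12461 50649298 .leaf) 12471 824085396508018 (.node .leaf 12499 233408091217 .leaf)) 13443
  44490602939020 (.node (.node (.node .leaf 13463 880526770 .leaf) 13467 202698252179 .leaf) 13469
  1050730272 (.node .leaf 13473 380098195 .leaf))) 13713 169539185759 (.node (.node (.node (.node
  .leaf 13717 50649254 .leaf) 13719 169539185547 .leaf) 13723 52516820399009 (.node .leaf 13743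
  39879960586640611709 .leaf)) 14663 53279814829552 (.node (.node (.node .leaf 14673
  8582962410730177 .leaf) 14687 229561199 .leaf) 14711 15760979602 (.node .leaf 14721 82399142977
  .leaf))))) 14807 60401459 (.node (.node (.node (.node (.node (.node .leaf 14809
  1931170017446524507 .leaf) 14811 3053074246897 .leaf) 14857 71136659 (.node (.node .leaf 14859
  598199408791578530377 .leaf) 14871 52516820557633 .leaf)) 14913 1013180645 (.node (.node (.node
  .leaf 14923 11816284589776991 .leaf) 14961 169539186208 .leaf) 14971 52516820399008 (.node .leaf
  14999 3501121368367 .leaf))) 15193 70048684 (.node (.node (.node (.node .leaf 15243 11302612369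
  .leaf) 15437 269804 .leaf) 15461 9386847719599039673848 (.node .leaf 15471 39879960586640611708
  .leaf)) 15499 52516820525617 (.node (.node (.node .leaf 15587 50649299 .leaf) 15599
  1804544419138415031 .leaf) 15617 2544486511994 (.node .leaf 15619 52516820524912 .leaf)))) 15623
  3501121368322 (.node (.node (.node (.node (.node .leaf 20343 3040490271551 .leaf) 20443 231210626
  .leaf) 20463 2966040195911 (.node .leaf 20473 3047587901066 .leaf)) 20493 15760955876 (.node
  (.node (.node .leaf 21693 50649131 .leaf) 21713 759739331 .leaf) 21723 12361280947620131 (.node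
  .leaf 21743 169539185876 .leaf))) 21843 11302612376 (.node (.node (.node (.node .leaf 22843
  12206773346974061 .leaf) 23093 11396089991 .leaf) 23443 51625761266 (.node .leaf 23463 3441717416
  .leaf)) 23473 3040490271566 (.node (.node (.node .leaf 23563 229447826 .leaf) 23623 15760955891
  .leaf) 24063 3441717446 (.node .leaf 24373 1039187891 .leaf)))))) 29093 203172526736 (.node (.node
  (.node (.node (.node (.node (.node .leaf 29343 529606306098896 .leaf) 30313 13513216803 .leaf)
  30623 233408091266 (.node (.node .leaf 31063 3864176 .leaf) 31123 3501121370516 .leaf)) 31213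
  11302612421 (.node (.node (.node .leaf 31223 3501121359941 .leaf) 31243 233408090591 .leaf) 35343
  7039177277285539592063433326 (.node .leaf 35593 1467279141080383166815977 .leaf))) 35943
  67675593604495182525766277854534901 (.node (.node (.node (.node .leaf 35963
  105595129902736671996987947126 .leaf) 35973 506775774102282192997 .leaf) 36063
  9078527361003354735912 (.node .leaf 36123 2692453903949257372 .leaf)) 37313 3468248801 (.node
  (.node (.node .leaf 37373 12361280947620582 .leaf) 37463 38143370767780 .leaf) 37473
  177244268846657230 (.node .leaf 37493 2018922999831455060788030 .leaf)))) 38443 11955262367839210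
  (.node (.node (.node (.node (.node .leaf 38463 2966040217960 .leaf) 38473 52023630792 .leaf) 38713
  60703617 (.node .leaf 38723 170941384992 .leaf)) 38743 38142324745587 (.node (.node (.node .leaf
  38943 605235157400219649401 .leaf) 38993 10373260941102757 .leaf) 39063 40349010493348257757
  (.node .leaf 39663 34773283883380252326 .leaf))) 39673 52023732042 (.node (.node (.node (.node
  .leaf 39913 45607354182920 .leaf) 39923 85592157042 .leaf) 42063 396089436734128183050849201
  (.node .leaf 42123 91358285299075374042997 .leaf)) 42163 521599258250703787326 (.node (.node
  (.node .leaf 42173 3545471314512 .leaf) 43313 136177910415039274795332 .leaf) 43373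
  6517698808882020326932 (.node .leaf 43663 3468238670 .leaf))))) 43673 169521438307 (.node (.node
  (.node (.node (.node (.node .leaf 53943 396089436734128186752796596 .leaf) 53993
  475209165804701383488567793 .leaf) 54063 4511706240299678835051085190302326 (.node .leaf 54373
  30283844997471825911820463 .leaf)) 54563 53134499411707 (.node (.node (.node .leaf 54623
  169521438082 .leaf) 54663 40349010493347976626 .leaf) 54673 691550729406832 (.node .leaf 57663
  117359642401409729353101 .leaf))) 57673 475209165804701383488568241 (.node (.node (.node (.node
  .leaf 58913 40354806230627938251 .leaf) 58923 2018923004698680967730741 .leaf) 60193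
  605322093459419073846 (.node .leaf 60243 2018923004698680967730323 .leaf)) 60313
  105595129902736672829921188063 (.node (.node (.node .leaf 60623
  52679931737439272366183466838814031 .leaf) 62063 15744687817 .leaf) 62123 15562387417 (.node .leaf
  62413 797764119687292 .leaf)))) 62423 27068166287046140692 (.node (.node (.node (.node (.node
  .leaf 66593 9079831401891286107771 .leaf) 66843 134594866979912064515354 .leaf) 67193
  6894006714761363286466978645 (.node .leaf 67213 605235157400174554645 .leaf)) 67223
  10261599432079570 (.node (.node (.node .leaf 67313 13182401770 .leaf) 67373 11301429445 .leaf)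
  68563 5706143801 (.node .leaf 68623 11816284618105259 .leaf))) 68713 116472907253575815107796
  (.node (.node (.node (.node .leaf 68723 134594866979547445299209 .leaf) 68743
  40003823163073711360228050309821626620884 .leaf) 73313 605322093459419087902 (.node .leaf 73373
  39879960490497876959 .leaf)) 73413 15744687802 (.node (.node (.node .leaf 73423 367342927 .leaf)
  74563 618254439886081289466 .leaf) 74623 454257676051104909168790867 (.node .leaf 74913
  243861702545 .leaf)))))))) 74923 3501537195367 (.node (.node (.node (.node (.node (.node (.node
  (.node (.node .leaf 75943 202698252169 .leaf) 75963 13513216804 .leaf) 75973 3376609 (.node (.node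
  .leaf 76213 759739444 .leaf) 76223 12361280947620244 .leaf)) 76243 824085396507994 (.node (.node
  (.node .leaf 77163 905134326 .leaf) 77173 3659594656563000310447 .leaf) 77413 3657925559045 (.node
  .leaf 77423 2658664039073683241 .leaf))) 77693 71136524 (.node (.node (.node (.node .leaf 77743
  116472907253575814063572 .leaf) 78123 787752307882072 .leaf) 98593 3040473782651 (.node .leaf
  99843 759738776 .leaf)) 101593 51651269276 (.node (.node (.node .leaf 101693 3443417501 .leaf)
  101713 459600447650757552431132726 .leaf) 101723 10010385661279691 (.node .leaf 101743
  3040473782876 .leaf)))) 102193 229561151 (.node (.node (.node (.node (.node .leaf 102213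
  40349010493344970286 .leaf) 102223 198118523441 .leaf) 102313 686878006273751 (.node .leaf 102373
  236414311391 .leaf)) 102463 879881601476 (.node (.node (.node .leaf 102473 85522094066 .leaf)
  102493 1067049626 .leaf) 108443 1050730256 (.node .leaf 108463 15760956206 .leaf))) 108473
  169539185756 (.node (.node (.node (.node .leaf 108563 57962531 .leaf) 108623 52516820557631 .leaf)
  108713 169539186206 (.node .leaf 108723 52516820399006 .leaf)) 108743 233435822126 (.node (.node
  (.node .leaf 109193 759739451 .leaf) 109213 9386847719599039673846 .leaf) 109223
  39879960586640611706 (.node .leaf 109243 12361280947620251 .leaf))))) 109343 824085396508001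
  (.node (.node (.node (.node (.node (.node .leaf 114093 117359642401409729351651 .leaf) 114193
  34773283883381347526 .leaf) 114213 10303170094106291 (.node (.node .leaf 114223 3040473782666
  .leaf) 114243 179819375049757466 .leaf)) 115443 236414343116 (.node (.node (.node .leaf 115463
  869437991 .leaf) 115473 759738791 .leaf) 115493 2543087793116 (.node .leaf 115593
  625789847973269311586 .leaf))) 116593 34773283883381867276 (.node (.node (.node (.node .leaf
  116843 13041569891 .leaf) 117193 40351909062577381991 .leaf) 117213 34773283883380250666 (.node
  .leaf 117223 51651269291 .leaf)) 117313 2318218925558683376 (.node (.node (.node .leaf 117373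
  3040473782891 .leaf) 117813 34773283883380250696 .leaf) 118123 1067049641 (.node .leaf 120193
  183118110417458651 .leaf)))) 120243 204903883316 (.node (.node (.node (.node (.node .leaf 120313
  40351909062577385366 .leaf) 120913 396089436734140673270300966 .leaf) 120923 906021866 (.node
  .leaf 121163 2690320415375194091 .leaf)) 121173 1067049866 (.node (.node (.node .leaf 121443
  45607108384436 .leaf) 121493 50815219707116 .leaf) 121873 15562386641 (.node .leaf 145343
  667359044085311 .leaf))) 145443 13207901561 (.node (.node (.node (.node .leaf 145463 3040473782696
  .leaf) 145473 15760954091 .leaf) 145493 5701472936 (.node .leaf 146693 2543087786396 .leaf))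
  146713 759738821 (.node (.node (.node .leaf 146723 2543087783216 .leaf) 146743 787752305985146
  .leaf) 146843 598199408799609175646 (.node .leaf 151443 203172526728 .leaf)))))) 151493
  529606306098888 (.node (.node (.node (.node (.node (.node (.node .leaf 151563 202699351428 .leaf)
  152163 906021896 .leaf) 152173 243972977104200020741 (.node (.node .leaf 152413 1067049896 .leaf)
  152423 39879960586105248618 .leaf)) 152693 15197709686 (.node (.node (.node .leaf 152743
  177244268846654876 .leaf) 153123 52516820525516 .leaf) 154093 1050730271 (.node .leaf 154343
  169539185546 .leaf))) 155313 4047071 (.node (.node (.node (.node .leaf 155623 787752307884266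
  .leaf) 156063 759739496 .leaf) 156123 27068166287076225476 (.node .leaf 156213 824085396508046
  .leaf)) 156223 787752307873691 (.node (.node (.node .leaf 156243 52516820524841 .leaf) 176593
  35113091637271010887993842215811727631802835665290201 .leaf) 176693
  3975431665038837017932501683925764582102 (.node .leaf 176713 300780416019978589004238617499821
  .leaf)))) 176723 459666464720746359183138622 (.node (.node (.node (.node (.node .leaf 176743
  2690320415421091826 .leaf) 177943 2564120249727 .leaf) 177963 97765306209723493745727 (.node .leaf
  177973 134594866655430334784727 .leaf)) 177993 102207977112870723994670722227 (.node (.node (.node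
  .leaf 178093 1537881350231991915436267020016052884333703481829705 .leaf) 179093
  3975431665038837017932501688189150273352 .leaf) 179343 576927056718627 (.node .leaf 179693
  585377362317163481391206973784062835459109648352 .leaf))) 179713
  205585337726299199854264200481598401381442726 (.node (.node (.node (.node .leaf 179723
  300780416019978589004238618501851 .leaf) 179813 23267272662321496834517763163977 .leaf) 179873
  31299131019232865275432372 (.node .leaf 180313 2042668656225755552001537 .leaf)) 180623
  12154596745811122 (.node (.node (.node .leaf 185343 114024549173019246349705 .leaf) 185593
  454257676057203217739321605 .leaf) 186563 231210507 (.node .leaf 186873 52516820383707 .leaf)))))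
  187313 19258235330230 (.node (.node (.node (.node (.node (.node .leaf 187373 39879960586105250980
  .leaf) 187463 1747093608803637226619155 .leaf) 187473 454257676051105124494381780 (.node .leaf
  187493 5174278841325063214500667170163030 .leaf)) 191593 667359044182960 (.node (.node (.node
  .leaf 191843 572134864830460 .leaf) 192193 40351909062576823585 .leaf) 192213 40349010493344992335
  (.node .leaf 192223 485697188473585 .leaf))) 192313 40351909062402305876 (.node (.node (.node
  (.node .leaf 192373 1282833336085 .leaf) 193563 3158309051 .leaf) 193623 38146316931867 (.node
  .leaf 193713 85590520587 .leaf)) 193723 54870649776837 (.node (.node (.node .leaf 193743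
  572194749304962 .leaf) 194693 4511706240299678835063579220704007 .leaf) 194713
  7039177277285539591143121507 (.node .leaf 194723 40354806230566848382 .leaf)))) 194963
  710624910761 (.node (.node (.node (.node (.node .leaf 194973 310711040129632 .leaf) 194993
  3167699865711467857132 .leaf) 195193 136177910415050366133776 (.node .leaf 195243 797074854414007
  .leaf)) 195313 9078527361003358023382 (.node (.node (.node .leaf 195913 117359833106408350533576
  .leaf) 195923 774770329542 .leaf) 196163 12207010333689501 (.node .leaf 196173 13660056417
  .leaf))) 198313 1336801848977682617792914130451 (.node (.node (.node (.node .leaf 198373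
  50815219754632 .leaf) 198413 1760397496596125258006076 .leaf) 198423 47374635792 (.node .leaf
  199563 7039177277285539591204110022 .leaf)) 199623 6044140028453170437607 (.node (.node (.node
  .leaf 199913 3040473888920 .leaf) 199923 530676792908292 .leaf) 210193
  1336801848977682617796616077776 (.node .leaf 210243 15381407662269358001 .leaf))))))) 210313
  67675483634383091124670530991083576 (.node (.node (.node (.node (.node (.node (.node (.node .leaf
  210623 47577028338199531841122 .leaf) 210813 40351909062577152982 .leaf) 210873 3546215906107
  (.node (.node .leaf 210913 117359642401409482593576 .leaf) 210923 710624910762 .leaf)) 213913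
  67675483634383091124683025082876626 (.node (.node (.node .leaf 213923 4660665635077372 .leaf)
  215163 1336801848977724772287270125751 .leaf) 215173 140802715793985542433622 (.node .leaf 216443
  26405962448942699165167526 .leaf))) 216493 305571206026888803609146932 (.node (.node (.node (.node
  .leaf 216563 349009089934822326694136466679707 .leaf) 216873 102207977111498652991978311307 .leaf)
  218313 3542554427557 (.node .leaf 218373 2543099875807 .leaf)) 218663 203656606670 (.node (.node
  (.node .leaf 218673 8582962410728932 .leaf) 269693
  2340706097967203306307786407467968998983061037175596 .leaf) 269713
  60891472906510720163575598573221109702196 (.node .leaf 269723 179354694361406121 .leaf)))) 269963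
  57798813511543 (.node (.node (.node (.node (.node .leaf 269973 1533119656693060859920060833418
  .leaf) 269993 23068220253479878731544005300240793265005552227445588 .leaf) 270193
  67675483634383091124683025082874721 (.node .leaf 270243 8653905850783001 .leaf)) 270313
  39025094073502804177943436993562771144537158082 (.node (.node (.node .leaf 271443 797131974937221
  .leaf) 271493 6813865140858048266089824088 .leaf) 271873 77614182619875948217510007552445463
  (.node .leaf 272693 667359044034457 .leaf))) 272743 50815219729207 (.node (.node (.node (.node
  .leaf 272813 11955262368396082 .leaf) 273123 2543099875582 .leaf) 273313
  300780416019978589004238614713582 (.node .leaf 273373 211179991047431190457 .leaf)) 273413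
  9078527361003357742251 (.node (.node (.node .leaf 273423 53138323627582 .leaf) 276413
  105595129902736671996987946851 .leaf) 276423 90672113693219476811366 (.node .leaf 277663
  1760397496596179944344501 .leaf))))) 277673 69375197898986305534361814082 (.node (.node (.node
  (.node (.node (.node .leaf 288313 2340706097967203306307786410779427977719436947605451 .leaf)
  288373 30377903214492691347175459869882319378284730708 .leaf) 288413
  1015133904067427737886494167818024976 (.node (.node .leaf 288423 576927056718866 .leaf) 288663
  53142131662476 .leaf)) 288673 67164145132754417707927809710523866 (.node (.node (.node .leaf
  288913 179354693602826376 .leaf) 288923 310711040079457 .leaf) 294563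
  173445144390270661153430529229268456352174201 (.node .leaf 294623
  1537881350233692499450802092372961235639779704439031 .leaf))) 294663
  23268944123399725409764784876226 (.node (.node (.node (.node .leaf 294673 9386847719599039218866
  .leaf) 294913 686891025023001 .leaf) 294923 261947866339274477477956319213036383241 (.node .leaf
  296413 710755352376 .leaf)) 296423 625789847973269078977 (.node (.node (.node .leaf 300943
  2601677165854059917301457938439026845282613096 .leaf) 300963 349009089934820020315460870092821
  .leaf) 300973 2318257209453177996 (.node .leaf 301213 625789847973269245948 .leaf)))) 301223
  1164212739298069048982040165143152198 (.node (.node (.node (.node (.node .leaf 301243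
  10070155963311022890160444574265395338983145085692 .leaf) 301443 23267272662321488446276460643471
  .leaf) 301493 1603830934590867169273916285563 (.node .leaf 301563
  265028777669275422366823311696213664063 .leaf)) 302693 10303365375345096 (.node (.node (.node
  .leaf 302743 600057347446769211749602422228675316179442 .leaf) 303123
  1053341446395913624650858023432568763188087382 .leaf) 307663 114024549173013493127376 (.node .leaf
  307673 2018922999831455021771366 .leaf))) 308913 40352188399178403876 (.node (.node (.node (.node
  .leaf 308923 6813865140839589418272418241 .leaf) 310193 45713818515217 .leaf) 310243
  41719323198217938592 (.node .leaf 310313 3542554428817 .leaf)) 310623 233408090542 (.node (.node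
  (.node .leaf 312063 117359771867689311270067 .leaf) 312123 1040591244196331305897707703192 .leaf)
  312413 1067039842 (.node .leaf 312423 52523057930467 .leaf)))))) 332843
  35113091637271945384767601934795854388160892319979895 (.node (.node (.node (.node (.node (.node
  (.node .leaf 332943 5235136349022300304731913051392396 .leaf) 332963 7039177277285172440727146696
  .leaf) 332973 136188635847227113101246 (.node (.node .leaf 332993 34773858141797670021 .leaf)
  334193 41719323198217949729 .leaf)) 334213 20554888774225680410823854 (.node (.node (.node .leaf
  334223 454257676055972627884827854 .leaf) 334243 22996794850333323293916000843479 .leaf) 334343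
  2265785091743060722182230521442291626582460480510091 (.node .leaf 335343
  23268944123399727096544091739895 .leaf))) 335593 305397683289390111832049245 (.node (.node (.node
  (.node .leaf 335943 228405128415171243160039497676439634895 .leaf) 335963
  23268944123399725409764738463020 .leaf) 335973 117359833106412048999670 (.node .leaf 336063
  136177910415050321039020 .leaf)) 336123 34207605338020 (.node (.node (.node .leaf 336563
  179328935525954695 .leaf) 336873 169539184870 .leaf) 341593 154550480630176521 (.node .leaf 341843
  261947866339274477477956319213036383454 .leaf)))) 342813 15760955759 (.node (.node (.node (.node
  (.node .leaf 343123 2658664039102011509 .leaf) 343563 1804608104673156626 .leaf) 343623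
  454257676055966760374939834 (.node .leaf 343713 15608868662944969588465616592171 .leaf)) 343723
  600057347446769211737537357625601927674209 (.node (.node (.node .leaf 343743
  13261110733567067784148399942619287230408584 .leaf) 366443 2042962065425539374147277 .leaf) 366493
  30283844997471825326570501 (.node .leaf 366563 1584517459771707197818392764602 .leaf))) 366873
  102207977111498653011235900709 (.node (.node (.node (.node .leaf 367063 3542554428802 .leaf)
  367123 1039188652 .leaf) 367163 153924820390150927 (.node .leaf 367173 1380937955677 .leaf))
  370163 797131974939576 (.node (.node (.node .leaf 370173 1533119656693060859920060833866 .leaf)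
  371413 10303365375347451 .leaf) 371423 1164212739298069048982040165143152616 (.node .leaf 372693
  605282825987676058221 .leaf))))) 372743 102207977112593841274086273626 (.node (.node (.node (.node
  (.node (.node .leaf 372813 459600447650757552436141341 .leaf) 373123
  177794769613857544235874312586711860906 .leaf) 374563 15760970992 (.node .leaf 374623
  52516820398492 .leaf)) 374913 3657629396045 (.node (.node (.node .leaf 374923
  20554888774248512856732367 .leaf) 379093 3047587901044 .leaf) 379343 2781288213214530319 (.node
  .leaf 379693 3040490271544 .leaf))) 379713 231210619 (.node (.node (.node (.node .leaf 379723
  15760955869 .leaf) 379813 202699351429 .leaf) 379873 753507484 (.node .leaf 381063 57962644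
  .leaf)) 381123 52516820557744 (.node (.node (.node .leaf 381213 169539186319 .leaf) 381223
  52516820399119 .leaf) 381243 3501121358869 (.node .leaf 385813 519496268816765579572 .leaf))))
  385873 134594867003759757216899 (.node (.node (.node (.node (.node .leaf 385913 45791867092326
  .leaf) 385923 7960152013482322 .leaf) 387063 829298372560822 (.node .leaf 387123
  15608868662944969589980286470281 .leaf)) 387413 243841958795 (.node (.node (.node .leaf 387423
  787845863337697 .leaf) 388443 45713818515899 .leaf) 388463 15760955774 (.node .leaf 388473
  169539185774 .leaf))) 388713 475209165804701383527571424 (.node (.node (.node (.node .leaf 388723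
  20554888774248512856732322 .leaf) 388743 15608868662944969588465615547947 .leaf) 389663
  243861849951 (.node .leaf 389673 1370325918281712114094822 .leaf)) 389913 424851576 (.node (.node
  (.node .leaf 389923 598199408797952589491 .leaf) 390193 16005597697 .leaf) 390243 787845868957072
  (.node .leaf 390623 177244269273475822 .leaf))))))))

def table2 : CodeTree :=
  .node (.node (.node (.node (.node (.node (.node (.node .leaf 3 70050412 .leaf) 13 13513218770
  (.node .leaf 17 1049644162 .leaf)) 19 4744162 (.node (.node .leaf 23 3377357 .leaf) 63
  241233247370 (.node .leaf 67 814162288097277 .leaf))) 69 1050756192 (.node (.node (.node .leaf 87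
  54277485873151 .leaf) 99 69280912 (.node .leaf 117 1050756194 .leaf)) 119 11302623492 (.node
  (.node .leaf 123 753508232 .leaf) 193 202698281561 .leaf))) 243 50660366 (.node (.node (.node
  (.node .leaf 313 54277449102695 .leaf) 317 814161736540565 (.node .leaf 319 202698281562 .leaf))
  337 12418227 (.node (.node .leaf 349 71162442 .leaf) 437 827881 .leaf)) 461 15744662443 (.node
  (.node (.node .leaf 471 71162443 .leaf) 499 69165487 (.node .leaf 587 15744662444 .leaf)) 599
  1037482417 (.node (.node .leaf 617 50660369 .leaf) 619 11302744992 .leaf)))) 623 753516332 (.node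
  (.node (.node (.node (.node .leaf 943 3618498710561 .leaf) 963 12212434321459166 (.node .leaf 967
  78533470171174512994908793145695731 .leaf)) 969 2044083754670064869557287 (.node (.node .leaf 973
  15761342891 .leaf) 1213 15761342921 .leaf)) 1217 48929716622356353194840 (.node (.node (.node
  .leaf 1219 12427844390642250465308840550759148683 .leaf) 1223 169539352391 (.node .leaf 1243
  11302623491 .leaf)) 1443 1178002052567617694923631897185435977 (.node (.node .leaf 1493
  3261981108157090212980 .leaf) 1563 618255080153599244645 .leaf))) 1567 39203311266247940 (.node
  (.node (.node (.node .leaf 1569 3618498710562 .leaf) 1587 814161737544102 (.node .leaf 1599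
  15761342892 .leaf)) 1687 54277449169606 (.node (.node .leaf 1711
  1178002052567617694923631897185435978 .leaf) 1721 30666484704344230776349657 .leaf)) 1749
  1039213692 (.node (.node (.node .leaf 2163 498234820935796455698667922937833234610032 .leaf) 2173
  742409508926011439227882 (.node .leaf 2187 41216937964317585751 .leaf)) 2211 12212434321459168
  (.node (.node .leaf 2221 15761342893 .leaf) 2307 1187390547879135455020909653442177297 .leaf)))))
  2309 48929716622132684932882 (.node (.node (.node (.node (.node (.node .leaf 2311 814162288097278
  .leaf) 2357 30666468362433014055532582 (.node .leaf 2359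
  758348367215970449981652973829447355507352 .leaf)) 2371 1039213693 (.node (.node .leaf 2413
  2044083754670064869557288 .leaf) 2423 77962213340589683411782660346096317 .leaf)) 2461 15761342923
  (.node (.node (.node .leaf 2471 169539352393 .leaf) 2499 15560541037 (.node .leaf 2693
  136272250311337657970485 .leaf)) 2743 3120400623181993167094218961563389183384 (.node (.node .leaf
  2937 1027786 .leaf) 2961 742409508926011439228557 .leaf))) 2971
  3120400623181993167094218961563389183383 (.node (.node (.node (.node .leaf 2999 233408115667
  .leaf) 3087 15761342924 (.node .leaf 3099 406021867945924767342 .leaf)) 3117 11302623494 (.node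
  (.node .leaf 3119 27068124529728317822 .leaf) 3123 2544486621632 .leaf)) 4093 3040474223426 (.node
  (.node (.node .leaf 4343 759905501 .leaf) 4693 814161736540436 (.node .leaf 4713 12212426048108486
  .leaf)) 4717 7045516378292175440 (.node (.node .leaf 4719 9454204631660 .leaf) 4723 3040474223441
  .leaf)))) 4813 186273416 (.node (.node (.node (.node (.node .leaf 4817
  45647281550595776392672888208375289900875039481 .leaf) 4819 88760775333790486200749397912 (.node
  .leaf 4837 869255444126808079091105011550501323431 .leaf)) 4849 3285214463516223822942 (.node
  (.node .leaf 4867 30668201963907070962087385 .leaf) 4869 140619642330924236625007 .leaf)) 4873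
  1067436641 (.node (.node (.node .leaf 6063 236169936671 .leaf) 6067 103504318201127086828117934840
  (.node .leaf 6069 740891393172913563189380 .leaf)) 6087 7811633248051584589147 (.node (.node .leaf
  6099 144485773489541265351928427107351063924695637 .leaf) 6117 31680214822073119811819840 .leaf)))
  6119 44956940776840627107249553816178142926731761183 (.node (.node (.node (.node .leaf 6123
  15562236266 .leaf) 6213 11302623483 (.node .leaf 6217 169539352413 .leaf)) 6219
  406021867945924767333 (.node (.node .leaf 6223 169541174891 .leaf) 6243 11302744991 .leaf)) 7193
  469701091886145020 (.node (.node (.node .leaf 7213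
  131712070010494122990227097332610354042499031900782 .leaf) 7217
  13038831661902121186366575173257519851477 (.node .leaf 7219 3040474223427 .leaf)) 7223
  460023029458606064431310787 (.node (.node .leaf 7463 6900287880075139121874528980 .leaf) 7467
  9086365577780148735605 .leaf)))))) 7469 759905502 (.node (.node (.node (.node (.node (.node (.node
  .leaf 7473 2112014321471541320787980 .leaf) 7493 2543090286207 (.node .leaf 7693
  2591171843498245590067950026077275786881544532 .leaf)) 7743 2044083754670064869555710 (.node
  (.node .leaf 7813 2086610895518626620729020 .leaf) 7817 41216935396741253292 (.node .leaf 7819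
  814161736540437 .leaf))) 7837 2747795693116083552 (.node (.node (.node .leaf 7849 3040474223442
  .leaf) 7937 183186379541072236 (.node .leaf 7961 7823975026915016649157 .leaf)) 7971
  183185293919100157 (.node (.node .leaf 7999 1067436642 .leaf) 8413
  131712070010494122990227097332610354042499031904157 .leaf))) 8423 459997257374298688576798287
  (.node (.node (.node (.node .leaf 8437 2747795693116083554 .leaf) 8461
  684709223258936645890093323125629348513125592228 (.node .leaf 8471 101359909279415966563234318
  .leaf)) 8557 7045516378292175860 (.node (.node .leaf 8559 236169936657 .leaf) 8561
  13038831661902121186366575173257519851478 .leaf)) 8607 9454200986782 (.node (.node (.node .leaf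
  8609 1067436657 .leaf) 8621 2112320543748462406693732 (.node .leaf 8663
  101359909279415966563234332 .leaf)) 8673 5411252075629326496815323182 (.node (.node .leaf 8711
  396095942966001256665024232 .leaf) 8721 9374642804531443899982 .leaf)))) 8749 1037482317 (.node
  (.node (.node (.node (.node .leaf 10813 31313406125742995 .leaf) 10817
  287307304115603954224127365054304024523465504167230657 (.node .leaf 10819
  864015405236761961481881069857 .leaf)) 10867 30666483824953245905119885 (.node (.node .leaf 10869
  31680214822073119811819825 .leaf) 10873 38146354293118 .leaf)) 10913
  172744627919270470110013034501535855695547532 (.node (.node (.node .leaf 10923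
  117174498720773768938507 .leaf) 10937 41216935396741253324 (.node .leaf 10961 12212426048108488
  .leaf)) 10971 3040474223443 (.node (.node .leaf 11057
  684709223258936225425094669200264957597098427297 .leaf) 11059 6900298322884796652748487257
  .leaf))) 11061 186273418 (.node (.node (.node (.node .leaf 11107 88760181714411928520207435707
  .leaf) 11109 81168781134439897452229848457 (.node .leaf 11121 1067436643 .leaf)) 11537
  469701091886145050 (.node (.node .leaf 11549 787932228330157 .leaf) 11557
  2591171843498245590067950026077275786881551282 .leaf)) 11559 7811633248051584595882 (.node (.node
  (.node .leaf 11561 12418228 .leaf) 11681 236169936658 (.node .leaf 11731 1067436658 .leaf)) 11787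
  630280065682 (.node (.node .leaf 11799 211890899185779039492 .leaf) 11857 140821369583230827112882
  .leaf))))) 11859 642158993286850068230793009366004728554227 (.node (.node (.node (.node (.node
  (.node .leaf 11871 1037482318 .leaf) 12063 42018687245 (.node .leaf 12067
  88760775333790486200749397913 .leaf)) 12069 739173254236388336547380 (.node (.node .leaf 12117
  81168781134439897452229848682 .leaf) 12119 6617735688711080920724405584586762640177969006985789267
  .leaf)) 12123 91354920287833072650148 (.node (.node (.node .leaf 12307
  864015405236761961481881070082 .leaf) 12309 360861946419116381701220859544132 (.node .leaf 12311
  236169936673 .leaf)) 12357 2499801653965737638151483832 (.node (.node .leaf 12359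
  26990703573965846854064433905472152022435183863133727 .leaf) 12371 15562236268 .leaf))) 12413
  219014297567748254863 (.node (.node (.node (.node .leaf 12423
  219250561170872511693347173625168752567 .leaf) 12461 759905548 (.node .leaf 12471 169541174893
  .leaf)) 12499 233406244162 (.node (.node .leaf 13443 630280308770 .leaf) 13463
  7039038454064966383516756735 .leaf)) 13467 3040474223429 (.node (.node (.node .leaf 13469
  219014297567748254862 .leaf) 13473 2499801653965737640881151735 (.node .leaf 13713
  1217531717016598461783447730507 .leaf)) 13717 759905504 (.node (.node .leaf 13719
  9632384899302751023461895140490070928313037 .leaf) 13723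
  2805462767378411438458685013786859937127886240040745322 .leaf)))) 13743 6090328019188871510009
  (.node (.node (.node (.node (.node .leaf 14663 5239914038940642457916372284776082 .leaf) 14673
  475203222331096797177297515 (.node .leaf 14687 12418229 .leaf)) 14711
  103499385877165686805514315332 (.node (.node .leaf 14721 1217531717016598461783447727807 .leaf)
  14807 236169936659 .leaf)) 14809 38146354293132 (.node (.node (.node .leaf 14811
  520775549870105639272 .leaf) 14857 1067436659 (.node .leaf 14859 91354920287833072650132 .leaf))
  14871 9632384899302751023461895140490070928313517 (.node (.node .leaf 14913
  5867146867262026196064617090 .leaf) 14923 2805462767378411438458685013786859937127886240040745367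
  .leaf))) 14961 475203222331096797177297725 (.node (.node (.node (.node .leaf 14971
  437301882184920303720377211441943719681192362890480258 .leaf) 14999 3501093662542 (.node .leaf
  15193 14600953171183216990 .leaf)) 15243 642158993286850068230793009366004728554197 (.node (.node
  .leaf 15437 269986 .leaf) 15461 2543090286208 .leaf)) 15471 6090328019188871510008 (.node (.node
  (.node .leaf 15499 52516404938242 .leaf) 15587 759905549 (.node .leaf 15599
  140802715792206535394892 .leaf)) 15617 11302744994 (.node (.node .leaf 15619
  140802711552348496239867 .leaf) 15623 625789847965362379532 .leaf))))))

def table3 : CodeTree :=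
  .node (.node (.node (.node (.node .leaf 3 1050757912 .leaf) 13 202698283520 (.node .leaf 17
  15744664162 .leaf)) 19 71164162 (.node (.node .leaf 23 50661107 .leaf) 63 3618498712520 (.node
  .leaf 67 52022862927 .leaf))) 69 15761368692 (.node (.node (.node .leaf 87 3468190861 .leaf) 99
  1039215412 (.node .leaf 117 15761368694 .leaf)) 119 169539363492 (.node (.node .leaf 123
  11302624232 .leaf) 193 3040474252811 .leaf))) 243 759916616 (.node (.node (.node (.node .leaf 313
  3618496606745 .leaf) 317 54277449101315 (.node .leaf 319 3040474252812 .leaf)) 337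
  12212426125987902 (.node (.node .leaf 349 1067462442 .leaf) 437 814161741732526 (.node .leaf 461
  236169962443 .leaf))) 471 1067462443 (.node (.node (.node .leaf 499 1037484037 .leaf) 587
  236169962444 (.node .leaf 599 15562260667 .leaf)) 617 759916619 (.node (.node .leaf 619
  15565427367 .leaf) 623 1037695157 .leaf)))

def table4 : CodeTree :=
  .node (.node (.node .leaf 3 15761370412 .leaf) 13 3040474254770 .leaf) 17 236169964162 (.node
  (.node .leaf 19 1067464162 .leaf) 23 759917357 .leaf)

def table : ℕ → CodeTree
  | 1 => table1 | 2 => table2 | 3 => table3 | 4 => table4 | _ => .leaf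

def certificate (n : ℕ) (r₂ : List (Fin 2 × Bool)) : List ACStep :=
  let c := (table n).find (wordCode r₂)
  ACStep.decode c c

def Certifies (n : ℕ) (r₂ : List (Fin 2 × Bool)) : Prop :=
  (certificate n r₂).foldl (fun p s => s.apply p) (msWord n, r₂) = ([(0, true)], [(1, true)])

instance (n : ℕ) (r₂ : List (Fin 2 × Bool)) : Decidable (Certifies n r₂) :=
  inferInstanceAs (Decidable (_ = _))

theorem acEquiv_of_certifies {n : ℕ} {r₂ : List (Fin 2 × Bool)} (h : Certifies n r₂) :
    ACEquiv (mk (msWord n), mk r₂) (x, y) := by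
  have h' := ACStep.acEquiv_foldl_apply (certificate n r₂) (msWord n, r₂)
  rw [Certifies] at h
  rwa [h] at h'

def letters : List (Fin 2 × Bool) := [(0, true), (1, true), (0, false), (1, false)]

lemma mem_letters (a : Fin 2 × Bool) : a ∈ letters := by
  revert a
  decide

def allWordsUpTo : ℕ → (List (Fin 2 × Bool) → Bool) → Bool
  | 0, f => f []
  | k + 1, f => f [] && letters.all fun a => allWordsUpTo k fun w => f (a :: w)

theorem allWordsUpTo_sound {k : ℕ} {f : List (Fin 2 × Bool) → Bool} (h : allWordsUpTo k f)
    {w : List (Fin 2 × Bool)} (hw : w.length ≤ k) : f w := by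
  induction k generalizing f w with
  | zero => simp_all [allWordsUpTo]
  | succ k ih =>
    simp only [allWordsUpTo, Bool.and_eq_true, List.all_eq_true] at h
    cases w with
    | nil => exact h.1
    | cons a w => exact ih (h.2 a (mem_letters a)) (by simpa using hw)

def ShortCasesCertified (w : List (Fin 2 × Bool)) : Prop :=
  reduce w = w → expSumX (mk w) = 1 → ∀ n ∈ Finset.Icc 1 4,
    2 * n + 3 + (reduce ((0, false) :: w)).length < 14 → Certifies n (reduce ((0, false) :: w))

instance (w : List (Fin 2 × Bool)) : Decidable (ShortCasesCertified w) :=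
  inferInstanceAs (Decidable (_ → _))

theorem shortCasesCertified {w : List (Fin 2 × Bool)} (hw : w.length ≤ 7) :
    ShortCasesCertified w :=
  of_decide_eq_true <| allWordsUpTo_sound (k := 7) (f := fun w => decide (ShortCasesCertified w))
    (by decide +kernel) hw

end MillerSchupp

theorem MS_short_AC_trivial_general (n : ℕ) (hn1 : 1 ≤ n)
    (w : F2) (hwlen : w.norm ≤ 7) (hwx : expSumX w = 1)
    (hlen : presLength (x⁻¹ * y ^ n * x * (y ^ (n + 1))⁻¹, x⁻¹ * w) < 14) :
    ACEquiv (x⁻¹ * y ^ n * x * (y ^ (n + 1))⁻¹, x⁻¹ * w) (x, y) := by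
  have hr₂ : x⁻¹ * w ≠ 1 := fun h => by
    have h' := congrArg expSumX h
    rw [_root_.map_mul, _root_.map_inv, hwx, mul_one, _root_.map_one] at h'
    exact absurd h' (by decide)
  simp only [presLength, norm_msRelator (Nat.one_le_iff_ne_zero.mp hn1)] at hlen
  have hn4 : n ≤ 4 := by
    have := norm_eq_zero.not.mpr hr₂
    omega
  obtain ⟨L, hL, rfl⟩ : ∃ L, reduce L = L ∧ mk L = w := ⟨w.toWord, reduce_toWord w, mk_toWord⟩
  have hxL : x⁻¹ * mk L = mk (reduce ((0, false) :: L)) := by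
    change (mk [(0, true)])⁻¹ * mk L = _
    rw [reduce.self, inv_mk, mul_mk]
    rfl
  rw [FreeGroup.norm, toWord_mk, hL] at hwlen
  rw [hxL, FreeGroup.norm, toWord_mk, reduce.idem] at hlen
  rw [← mk_msWord, hxL]
  exact MillerSchupp.acEquiv_of_certifies
    (MillerSchupp.shortCasesCertified hwlen hL hwx n (Finset.mem_Icc.mpr ⟨hn1, hn4⟩) hlen)

theorem MS_short_AC_trivial (n : ℕ) (hn1 : 1 ≤ n) (hn7 : n ≤ 7)
    (w : F2) (hwlen : w.norm ≤ 7) (hwx : expSumX w = 1)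
    (hlen : presLength (x⁻¹ * y ^ n * x * (y ^ (n + 1))⁻¹, x⁻¹ * w) < 14) :
    ACEquiv (x⁻¹ * y ^ n * x * (y ^ (n + 1))⁻¹, x⁻¹ * w) (x, y) :=
  MS_short_AC_trivial_general n hn1 w hwlen hwx hlen
end

section
/- The length-15 balanced presentation ⟨x, y | x⁻¹y³x = y⁴, x = y⁻¹x⁻¹yxy⟩, i.e. the pair (x⁻¹y³xy⁻⁴, x⁻¹y⁻¹x⁻¹yxy), is AC-equivalent to AK(3) = (x³y⁻⁴, xyxy⁻¹x⁻¹y⁻¹). -/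
theorem MS3_wstar_AC_equivalent_to_AK3 :
    ACEquiv (x⁻¹ * y ^ 3 * x * (y ^ 4)⁻¹, x⁻¹ * y⁻¹ * x⁻¹ * y * x * y) AK3 := by
  have hy3 : (y:F2)^3 = y*y*y := by rw [pow_succ, pow_succ, pow_one]
  have hy4 : (y:F2)^4 = y*y*y*y := by rw [pow_succ, pow_succ, pow_succ, pow_one]
  rw [hy3, hy4]
  refine Relation.ReflTransGen.head (b := (((y * y * y * y * x⁻¹ * y⁻¹ * y⁻¹ * y⁻¹ * x) , (x⁻¹ * y⁻¹ * x⁻¹ * y * x * y)))) (Or.inr (Or.inr (Or.inr (Or.inr (Or.inl (by ext1 <;> group <;> norm_num [zpow_ofNat, pow_succ])))))) ?_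
  refine Relation.ReflTransGen.head (b := (((y * y * y * y * x⁻¹ * y⁻¹ * y⁻¹ * y⁻¹ * x) , (y⁻¹ * x⁻¹ * y * x * y * x⁻¹)))) (Or.inr (Or.inr (Or.inr (Or.inr (Or.inr (Or.inr ⟨x, Or.inl rfl, Or.inr (by ext1 <;> group <;> norm_num [zpow_ofNat, pow_succ])⟩)))))) ?_
  refine Relation.ReflTransGen.head (b := (((y * y * y * x⁻¹ * y⁻¹ * y⁻¹ * y⁻¹ * x * y) , (y⁻¹ * x⁻¹ * y * x * y * x⁻¹)))) (Or.inr (Or.inr (Or.inr (Or.inr (Or.inr (Or.inr ⟨y⁻¹, Or.inr (Or.inr (Or.inr rfl)), Or.inl (by ext1 <;> group <;> norm_num [zpow_ofNat, pow_succ])⟩)))))) ?_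
  refine Relation.ReflTransGen.head (b := (((y * y * y * x⁻¹ * y⁻¹ * y⁻¹ * x * y * x⁻¹) , (y⁻¹ * x⁻¹ * y * x * y * x⁻¹)))) (Or.inl (by ext1 <;> group <;> norm_num [zpow_ofNat, pow_succ])) ?_
  refine Relation.ReflTransGen.head (b := (((x⁻¹ * y * y * y * x⁻¹ * y⁻¹ * y⁻¹ * x * y) , (y⁻¹ * x⁻¹ * y * x * y * x⁻¹)))) (Or.inr (Or.inr (Or.inr (Or.inr (Or.inr (Or.inr ⟨x⁻¹, Or.inr (Or.inr (Or.inl rfl)), Or.inl (by ext1 <;> group <;> norm_num [zpow_ofNat, pow_succ])⟩)))))) ?_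
  refine Relation.ReflTransGen.head (b := (((x⁻¹ * y * y * y * x⁻¹ * y⁻¹ * x * y * x⁻¹) , (y⁻¹ * x⁻¹ * y * x * y * x⁻¹)))) (Or.inl (by ext1 <;> group <;> norm_num [zpow_ofNat, pow_succ])) ?_
  refine Relation.ReflTransGen.head (b := (((x⁻¹ * x⁻¹ * y * y * y * x⁻¹ * y⁻¹ * x * y) , (y⁻¹ * x⁻¹ * y * x * y * x⁻¹)))) (Or.inr (Or.inr (Or.inr (Or.inr (Or.inr (Or.inr ⟨x⁻¹, Or.inr (Or.inr (Or.inl rfl)), Or.inl (by ext1 <;> group <;> norm_num [zpow_ofNat, pow_succ])⟩)))))) ?_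
  refine Relation.ReflTransGen.head (b := (((x⁻¹ * x⁻¹ * y * y * y * y * x⁻¹) , (y⁻¹ * x⁻¹ * y * x * y * x⁻¹)))) (Or.inl (by ext1 <;> group <;> norm_num [zpow_ofNat, pow_succ])) ?_
  refine Relation.ReflTransGen.head (b := (((x⁻¹ * x⁻¹ * y * y * y * y * x⁻¹) , (x⁻¹ * y * x * y * x⁻¹ * y⁻¹)))) (Or.inr (Or.inr (Or.inr (Or.inr (Or.inr (Or.inr ⟨y, Or.inr (Or.inl rfl), Or.inr (by ext1 <;> group <;> norm_num [zpow_ofNat, pow_succ])⟩)))))) ?_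
  refine Relation.ReflTransGen.head (b := (((x⁻¹ * x⁻¹ * y * y * y * y * x⁻¹) , (y * x * y * x⁻¹ * y⁻¹ * x⁻¹)))) (Or.inr (Or.inr (Or.inr (Or.inr (Or.inr (Or.inr ⟨x, Or.inl rfl, Or.inr (by ext1 <;> group <;> norm_num [zpow_ofNat, pow_succ])⟩)))))) ?_
  refine Relation.ReflTransGen.head (b := (((x⁻¹ * y * y * y * y * x⁻¹ * x⁻¹) , (y * x * y * x⁻¹ * y⁻¹ * x⁻¹)))) (Or.inr (Or.inr (Or.inr (Or.inr (Or.inr (Or.inr ⟨x, Or.inl rfl, Or.inl (by ext1 <;> group <;> norm_num [zpow_ofNat, pow_succ])⟩)))))) ?_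
  refine Relation.ReflTransGen.head (b := (((y * y * y * y * x⁻¹ * x⁻¹ * x⁻¹) , (y * x * y * x⁻¹ * y⁻¹ * x⁻¹)))) (Or.inr (Or.inr (Or.inr (Or.inr (Or.inr (Or.inr ⟨x, Or.inl rfl, Or.inl (by ext1 <;> group <;> norm_num [zpow_ofNat, pow_succ])⟩)))))) ?_
  refine Relation.ReflTransGen.head (b := (((y * y * y * y * x⁻¹ * x⁻¹ * x⁻¹) , (x * y * x * y⁻¹ * x⁻¹ * y⁻¹)))) (Or.inr (Or.inr (Or.inr (Or.inr (Or.inr (Or.inl (by ext1 <;> group <;> norm_num [zpow_ofNat, pow_succ]))))))) ?_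
  refine Relation.ReflTransGen.head (b := (((x * x * x * y⁻¹ * y⁻¹ * y⁻¹ * y⁻¹) , (x * y * x * y⁻¹ * x⁻¹ * y⁻¹)))) (Or.inr (Or.inr (Or.inr (Or.inr (Or.inl (by ext1 <;> group <;> norm_num [zpow_ofNat, pow_succ])))))) ?_

  have h : ((x * x * x * y⁻¹ * y⁻¹ * y⁻¹ * y⁻¹) , (x * y * x * y⁻¹ * x⁻¹ * y⁻¹)) = AK3 := by
    unfold AK3
    have hx3 : (x:F2)^3 = x*x*x := by rw [pow_succ, pow_succ, pow_one]
    rw [hx3, hy4]; ext1 <;> group <;> norm_num [zpow_ofNat, pow_succ]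
  rw [h]
end
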